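/- arXiv:2212.10824 — 6 statements merged into one kernel-verified Lean document; each statement's English description precedes it below -/
import Mathlib

section
/- Let A_0, A_1, A_2 be a symmetric association scheme with two classes on a vertex set of size v, with primitive idempotents E_0 = (1/v)J, E_1, E_2 satisfying A_0 = E_0 + E_1 + E_2, A_1 = k E_0 + θ E_1 + τ E_2, and A_2 = (v−1−k) E_0 − (θ+1) E_1 − (τ+1) E_2, and set b = −(θ+1)(τ+1) and c = k + θτ, with c ≠ 0. Let A_{ij} and E_{ij}, for i+j ≤ N, be defined by (A_0 + x_1 A_1 + x_2 A_2)^{⊗N} = Σ_{i+j≤N} A_{ij} x_1^i x_2^j and (E_0 + X_1 E_1 + X_2 E_2)^{⊗N} = Σ_{i+j≤N} X_1^i X_2^j E_{ij}. Then for all i+j ≤ N, A_{10} E_{ij} = θ_{ij} E_{ij} and A_{01} E_{ij} = μ_{ij} E_{ij}, where θ_{ij} = (N−i−j)k + iθ + jτ and μ_{ij} = (N−i−j)(kb/c) − i(θ+1) − j(τ+1). -/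
open Matrix Finset
open scoped Classical

noncomputable section

/-- Exponent vector of the monomial `x^m * y^n` in `MvPolynomial (Fin 2) ℝ`. -/
def mexp (m n : ℕ) : Fin 2 →₀ ℕ := Finsupp.single 0 m + Finsupp.single 1 n

/-- The partial order `⪯_{(α,β)}` on `ℕ × ℕ`. -/
def abLE (a b : ℝ) (p q : ℕ × ℕ) : Prop :=
  (p.1 : ℝ) + a * p.2 ≤ (q.1 : ℝ) + a * q.2 ∧
  b * p.1 + (p.2 : ℝ) ≤ b * q.1 + (q.2 : ℝ)

/-- An `(α,β)`-compatible bivariate polynomial of degree `(i,j)`. -/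
def CompatPoly (a b : ℝ) (ij : ℕ × ℕ) (v : MvPolynomial (Fin 2) ℝ) : Prop :=
  v.coeff (mexp ij.1 ij.2) ≠ 0 ∧
  ∀ m n : ℕ, v.coeff (mexp m n) ≠ 0 → abLE a b (m, n) ij

/-- An `(α,β)`-compatible subset of `ℕ × ℕ`. -/
def CompatSet (a b : ℝ) (D : Set (ℕ × ℕ)) : Prop :=
  ∀ p q : ℕ × ℕ, q ∈ D → abLE a b p q → p ∈ D

/-- Evaluation `v(M,N) = Σ c_{mn} M^m N^n` of a bivariate polynomial at two matrices. -/
def evalMat {V : Type*} [Fintype V] [DecidableEq V]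
    (v : MvPolynomial (Fin 2) ℝ) (M N : Matrix V V ℝ) : Matrix V V ℝ :=
  ∑ d ∈ v.support, v.coeff d • (M ^ d 0 * N ^ d 1)

/-- A symmetric association scheme whose adjacency matrices are labeled by a
finite subset `D` of `ℕ × ℕ`, with identity label `(0,0)` and given intersection numbers. -/
structure BivScheme (V : Type*) [Fintype V] [DecidableEq V] (D : Finset (ℕ × ℕ)) where
  A : ℕ × ℕ → Matrix V V ℝ
  mem00 : (0, 0) ∈ D
  nonzero : ∀ p ∈ D, A p ≠ 0
  entries : ∀ p ∈ D, ∀ x y, A p x y = 0 ∨ A p x y = 1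
  identity : A (0, 0) = 1
  sum_eq : ∑ p ∈ D, A p = Matrix.of fun _ _ => (1 : ℝ)
  symm : ∀ p ∈ D, (A p)ᵀ = A p
  inter : ℕ × ℕ → ℕ × ℕ → ℕ × ℕ → ℝ
  mul_eq : ∀ p ∈ D, ∀ q ∈ D, A p * A q = ∑ r ∈ D, inter p q r • A r
  comm : ∀ p ∈ D, ∀ q ∈ D, A p * A q = A q * A p

/-- Bivariate `P`-polynomial association scheme of type `(α,β)` on `D`
(with the given labeling). -/
def BivPPoly {V : Type*} [Fintype V] [DecidableEq V] {D : Finset (ℕ × ℕ)}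
    (S : BivScheme V D) (a b : ℝ) : Prop :=
  CompatSet a b ↑D ∧
  ∀ p ∈ D, ∃ v : MvPolynomial (Fin 2) ℝ, CompatPoly a b p v ∧
    S.A p = evalMat v (S.A (1, 0)) (S.A (0, 1))

/-- The symmetrized tensor M_{ij} = Σ_{f : |f⁻¹(1)| = i, |f⁻¹(2)| = j} M_{f(1)} ⊗ ⋯ ⊗ M_{f(N)}
of a triple of matrices, a matrix indexed by Fin N → V. -/
def symTensor {V : Type*} [Fintype V] [DecidableEq V] (M : Fin 3 → Matrix V V ℝ)
    (N i j : ℕ) : Matrix (Fin N → V) (Fin N → V) ℝ :=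
  Matrix.of fun x y =>
    ∑ f ∈ Finset.univ.filter (fun f : Fin N → Fin 3 =>
        (Finset.univ.filter fun s => f s = 1).card = i ∧
        (Finset.univ.filter fun s => f s = 2).card = j),
      ∏ s, M (f s) (x s) (y s)

section SymAuxSec
namespace SymAux
variable {V : Type*} [Fintype V] [DecidableEq V]

def tens {n : ℕ} (M : Fin n → Matrix V V ℝ) : Matrix (Fin n → V) (Fin n → V) ℝ :=
  Matrix.of fun x y => ∏ s, M s (x s) (y s)

set_option linter.unusedSectionVars false

lemma tens_mul {n : ℕ} (M M' : Fin n → Matrix V V ℝ) :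
    tens M * tens M' = tens (fun s => M s * M' s) := by
  ext x y
  simp only [tens, Matrix.mul_apply, Matrix.of_apply]
  rw [show (∏ s, ∑ w, M s (x s) w * M' s w (y s)) =
      ∑ p ∈ Fintype.piFinset (fun _ : Fin n => (univ : Finset V)),
        ∏ s, M s (x s) (p s) * M' s (p s) (y s) from Finset.prod_univ_sum _ _]
  rw [Fintype.piFinset_univ]
  exact Finset.sum_congr rfl fun z _ => (Finset.prod_mul_distrib).symm

lemma tens_smul {n : ℕ} (c : Fin n → ℝ) (M : Fin n → Matrix V V ℝ) :
    tens (fun s => c s • M s) = (∏ s, c s) • tens M := by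
  ext x y
  simp [tens, Finset.prod_mul_distrib]

lemma symTensor_eq (M : Fin 3 → Matrix V V ℝ) (N i j : ℕ) :
    symTensor M N i j = ∑ f ∈ Finset.univ.filter (fun f : Fin N → Fin 3 =>
        (Finset.univ.filter fun s => f s = 1).card = i ∧
        (Finset.univ.filter fun s => f s = 2).card = j),
      tens (fun s => M (f s)) := by
  ext x y
  simp [symTensor, tens, Matrix.sum_apply]

lemma filter_delta {N : ℕ} (a : Fin 3) (t : Fin N) (m : Fin 3) (hm : m ≠ 0) :
    (univ.filter fun s => (if s = t then a else 0) = m) =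
      (if a = m then {t} else ∅) := by
  split_ifs with h
  · ext s
    simp only [Finset.mem_filter, Finset.mem_univ, true_and, Finset.mem_singleton]
    constructor
    · intro hs; by_contra hst
      rw [if_neg hst] at hs; exact hm hs.symm
    · intro hs; subst hs; simp [h]
  · ext s
    simp only [Finset.mem_filter, Finset.mem_univ, true_and, Finset.notMem_empty,
      iff_false]
    intro hs
    split_ifs at hs with hst
    · exact h hs
    · exact hm hs.symm

lemma filter_single {N : ℕ} (a : Fin 3) (ha : a ≠ 0) :
    (univ.filter (fun f : Fin N → Fin 3 =>
        (Finset.univ.filter fun s => f s = 1).card = (if a = 1 then 1 else 0) ∧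
        (Finset.univ.filter fun s => f s = 2).card = (if a = 2 then 1 else 0))) =
      univ.image (fun t : Fin N => fun s => if s = t then a else 0) := by
  ext f
  simp only [Finset.mem_filter, Finset.mem_univ, true_and, Finset.mem_image]
  constructor
  · rintro ⟨h1, h2⟩
    have ha12 : a = 1 ∨ a = 2 := by fin_cases a <;> simp_all
    have key : ∃ t : Fin N, (univ.filter fun s => f s = a) = {t} := by
      rcases ha12 with h | h <;> subst h
      · simp only [if_pos rfl] at h1; exact Finset.card_eq_one.mp h1
      · simp only [if_pos rfl] at h2
        exact Finset.card_eq_one.mp h2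
    obtain ⟨t, ht⟩ := key
    refine ⟨t, ?_⟩
    funext s
    symm
    by_cases hst : s = t
    · subst hst
      simp only [if_pos rfl]
      have : s ∈ ({s} : Finset (Fin N)) := Finset.mem_singleton_self s
      rw [← ht] at this
      exact (Finset.mem_filter.mp this).2
    · rw [if_neg hst]
      have hsa : f s ≠ a := by
        intro hfa
        have : s ∈ univ.filter fun s => f s = a := by simp [hfa]
        rw [ht] at this
        exact hst (Finset.mem_singleton.mp this)
      have h1s : f s ≠ 1 ∧ f s ≠ 2 := by
        rcases ha12 with h | h <;> subst h
        · refine ⟨hsa, fun hf2 => ?_⟩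
          have : s ∈ univ.filter fun s => f s = 2 := by simp [hf2]
          have h2' := h2
          rw [if_neg (by decide : ¬((1:Fin 3) = 2))] at h2'
          rw [Finset.card_eq_zero.mp h2'] at this
          exact absurd this (Finset.notMem_empty s)
        · refine ⟨fun hf1 => ?_, hsa⟩
          have : s ∈ univ.filter fun s => f s = 1 := by simp [hf1]
          have h1' := h1
          rw [if_neg (by decide : ¬((2:Fin 3) = 1))] at h1'
          rw [Finset.card_eq_zero.mp h1'] at this
          exact absurd this (Finset.notMem_empty s)
      have : ∀ z : Fin 3, z ≠ 1 → z ≠ 2 → z = 0 := by decide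
      exact this _ h1s.1 h1s.2
  · rintro ⟨t, rfl⟩
    constructor
    · rw [filter_delta a t 1 (by decide)]
      split_ifs <;> simp
    · rw [filter_delta a t 2 (by decide)]
      split_ifs <;> simp

lemma core (A E : Fin 3 → Matrix V V ℝ) (w : Fin 3 → ℝ) (a : Fin 3) (ha : a ≠ 0)
    (hA0 : ∀ m, A 0 * E m = E m) (hAa : ∀ m, A a * E m = w m • E m)
    (N i j : ℕ) (hij : i + j ≤ N) :
    symTensor A N (if a = 1 then 1 else 0) (if a = 2 then 1 else 0) * symTensor E N i j
      = (((N : ℝ) - i - j) * w 0 + (i : ℝ) * w 1 + (j : ℝ) * w 2) • symTensor E N i j := by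
  rw [symTensor_eq, symTensor_eq, filter_single a ha]
  have hinj : ∀ t ∈ (univ : Finset (Fin N)), ∀ t' ∈ univ,
      (fun s => if s = t then a else 0) = (fun s => if s = t' then a else 0) → t = t' := by
    intro t _ t' _ h
    by_contra hne
    have := congrFun h t
    rw [if_pos rfl, if_neg hne] at this
    exact ha this
  rw [Finset.sum_image hinj, Finset.sum_mul]
  have step : ∀ t : Fin N,
      tens (fun s => A (if s = t then a else 0)) *
        (∑ g ∈ Finset.univ.filter (fun g : Fin N → Fin 3 =>
          (Finset.univ.filter fun s => g s = 1).card = i ∧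
          (Finset.univ.filter fun s => g s = 2).card = j), tens (fun s => E (g s))) =
      ∑ g ∈ Finset.univ.filter (fun g : Fin N → Fin 3 =>
          (Finset.univ.filter fun s => g s = 1).card = i ∧
          (Finset.univ.filter fun s => g s = 2).card = j),
        w (g t) • tens (fun s => E (g s)) := by
    intro t
    rw [Finset.mul_sum]
    refine Finset.sum_congr rfl fun g _ => ?_
    rw [tens_mul]
    have : (fun s => A (if s = t then a else 0) * E (g s)) =
        fun s => (if s = t then w (g s) else 1) • E (g s) := by
      funext s
      by_cases hst : s = t
      · rw [if_pos hst, if_pos hst, hAa]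
      · rw [if_neg hst, if_neg hst, hA0, one_smul]
    rw [this, tens_smul, Finset.prod_ite_eq' univ t (fun s => w (g s)),
      if_pos (Finset.mem_univ t)]
  simp only [step]
  rw [Finset.sum_comm]
  rw [Finset.smul_sum]
  refine Finset.sum_congr rfl fun g hg => ?_
  rw [← Finset.sum_smul]
  congr 1
  obtain ⟨-, hg1, hg2⟩ := Finset.mem_filter.mp hg
  have hfib : ∀ m : Fin 3, ∑ t ∈ univ.filter (fun t => g t = m), w (g t) =
      ((univ.filter (fun t => g t = m)).card : ℝ) * w m := by
    intro m
    rw [Finset.sum_congr rfl (fun t ht => by rw [(Finset.mem_filter.mp ht).2]),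
      Finset.sum_const, nsmul_eq_mul]
  have hsplit : ∑ t : Fin N, w (g t)
      = ∑ m : Fin 3, ∑ t ∈ univ.filter (fun t => g t = m), w (g t) :=
    (Finset.sum_fiberwise univ g (fun t => w (g t))).symm
  have hcard : (univ.filter (fun t : Fin N => g t = 0)).card + i + j = N := by
    have h1 : (univ : Finset (Fin N)).card
        = ∑ m : Fin 3, (univ.filter (fun t => g t = m)).card :=
      Finset.card_eq_sum_card_fiberwise (fun t _ => Finset.mem_univ (g t))
    rw [Finset.card_univ, Fintype.card_fin, Fin.sum_univ_three, hg1, hg2] at h1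
    omega
  have hc0 : ((univ.filter (fun t : Fin N => g t = 0)).card : ℝ) = (N : ℝ) - i - j := by
    have := congrArg (fun n : ℕ => (n : ℝ)) hcard
    push_cast at this
    linarith
  rw [hsplit, Fin.sum_univ_three, hfib, hfib, hfib, hg1, hg2, hc0]

end SymAux
end SymAuxSec

/-- in the symmetrization of a two-class association scheme, the
symmetrized idempotents E_{ij} are common eigenvectors of A₁₀ and A₀₁ with
eigenvalues θ_{ij} = (N−i−j)k + iθ + jτ and μ_{ij} = (N−i−j)(kb/c) − i(θ+1) − j(τ+1). -/
theorem symmetrization_idempotent_eigenvalues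
    {V : Type*} [Fintype V] [DecidableEq V]
    (A₀ A₁ A₂ E₀ E₁ E₂ : Matrix V V ℝ)
    -- two-class symmetric association scheme axioms
    (h₁ne : A₁ ≠ 0) (h₂ne : A₂ ≠ 0)
    (h₁01 : ∀ x y, A₁ x y = 0 ∨ A₁ x y = 1) (h₂01 : ∀ x y, A₂ x y = 0 ∨ A₂ x y = 1)
    (h0 : A₀ = 1) (hsum : A₀ + A₁ + A₂ = Matrix.of fun _ _ => (1 : ℝ))
    (h₁symm : A₁ᵀ = A₁) (h₂symm : A₂ᵀ = A₂)
    -- primitive idempotents E₀ = (1/v)J, E₁, E₂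
    (hE₀ : E₀ = (Fintype.card V : ℝ)⁻¹ • Matrix.of fun _ _ => (1 : ℝ))
    (hE₀₀ : E₀ * E₀ = E₀) (hE₁₁ : E₁ * E₁ = E₁) (hE₂₂ : E₂ * E₂ = E₂)
    (hE₀₁ : E₀ * E₁ = 0) (hE₁₀ : E₁ * E₀ = 0) (hE₀₂ : E₀ * E₂ = 0)
    (hE₂₀ : E₂ * E₀ = 0) (hE₁₂ : E₁ * E₂ = 0) (hE₂₁ : E₂ * E₁ = 0)
    (hE₀symm : E₀ᵀ = E₀) (hE₁symm : E₁ᵀ = E₁) (hE₂symm : E₂ᵀ = E₂)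
    -- eigenvalue decompositions of A₀, A₁, A₂, with eigenvalues k, θ, τ
    (k θ τ : ℝ)
    (hA₀E : A₀ = E₀ + E₁ + E₂)
    (hA₁E : A₁ = k • E₀ + θ • E₁ + τ • E₂)
    (hA₂E : A₂ = ((Fintype.card V : ℝ) - 1 - k) • E₀
      + (-(θ + 1)) • E₁ + (-(τ + 1)) • E₂)
    -- parameters b = −(θ+1)(τ+1), c = k + θτ, with c ≠ 0
    (b c : ℝ) (hb : b = -(θ + 1) * (τ + 1)) (hc : c = k + θ * τ) (hcne : c ≠ 0)
    (N : ℕ) (hN : 1 ≤ N) :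
    ∀ i j : ℕ, i + j ≤ N →
      symTensor ![A₀, A₁, A₂] N 1 0 * symTensor ![E₀, E₁, E₂] N i j =
        (((N : ℝ) - i - j) * k + i * θ + j * τ) • symTensor ![E₀, E₁, E₂] N i j ∧
      symTensor ![A₀, A₁, A₂] N 0 1 * symTensor ![E₀, E₁, E₂] N i j =
        (((N : ℝ) - i - j) * (k * b / c) - i * (θ + 1) - j * (τ + 1)) •
          symTensor ![E₀, E₁, E₂] N i j := by
  classical
  -- basic facts
  have hne : Nonempty V := by
    by_contra h
    rw [not_nonempty_iff] at h
    exact h₁ne (by ext x y; exact (h.false x).elim)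
  obtain ⟨x₀⟩ := hne
  have : Nonempty V := ⟨x₀⟩
  have hvpos : 0 < Fintype.card V := Fintype.card_pos
  have hvne : (Fintype.card V : ℝ) ≠ 0 := Nat.cast_ne_zero.mpr hvpos.ne'
  -- eigen-equations
  have hA1E0 : A₁ * E₀ = k • E₀ := by
    rw [hA₁E]
    simp [add_mul, Matrix.smul_mul, hE₀₀, hE₁₀, hE₂₀]
  have hA1E1 : A₁ * E₁ = θ • E₁ := by
    rw [hA₁E]
    simp [add_mul, Matrix.smul_mul, hE₀₁, hE₁₁, hE₂₁]
  have hA1E2 : A₁ * E₂ = τ • E₂ := by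
    rw [hA₁E]
    simp [add_mul, Matrix.smul_mul, hE₀₂, hE₁₂, hE₂₂]
  have hA2E0 : A₂ * E₀ = ((Fintype.card V : ℝ) - 1 - k) • E₀ := by
    rw [hA₂E]
    simp [add_mul, Matrix.smul_mul, hE₀₀, hE₁₀, hE₂₀]
  have hA2E1 : A₂ * E₁ = (-(θ + 1)) • E₁ := by
    rw [hA₂E]
    simp [add_mul, Matrix.smul_mul, hE₀₁, hE₁₁, hE₂₁]
  have hA2E2 : A₂ * E₂ = (-(τ + 1)) • E₂ := by
    rw [hA₂E]
    simp [add_mul, Matrix.smul_mul, hE₀₂, hE₁₂, hE₂₂]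
  -- scalar identity (Fintype.card V - 1 - k) = k*b/c
  set v : ℝ := (Fintype.card V : ℝ) with hvdef
  have hE₀e : ∀ z y : V, E₀ z y = v⁻¹ := by
    intro z y; rw [hE₀]; simp
  set e₁ := E₁ x₀ x₀ with he1def
  set e₂ := E₂ x₀ x₀ with he2def
  have eq1 : v⁻¹ + e₁ + e₂ = 1 := by
    have h := hA₀E
    rw [h0] at h
    have h' := congrFun (congrFun h.symm x₀) x₀
    simpa [Matrix.add_apply, Matrix.one_apply_eq, hE₀e] using h'
  have hdiag : A₁ x₀ x₀ = 0 := by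
    have h := congrFun (congrFun hsum x₀) x₀
    rw [h0] at h
    simp only [Matrix.add_apply, Matrix.one_apply_eq, Matrix.of_apply] at h
    rcases h₁01 x₀ x₀ with h1 | h1
    · exact h1
    · rcases h₂01 x₀ x₀ with h2 | h2 <;> linarith
  have eq2 : k * v⁻¹ + θ * e₁ + τ * e₂ = 0 := by
    have h := congrFun (congrFun hA₁E x₀) x₀
    rw [hdiag] at h
    simpa [Matrix.add_apply, Matrix.smul_apply, smul_eq_mul, hE₀e] using h.symm
  have hrow : ∑ z, A₁ x₀ z = k := by
    have h := congrFun (congrFun hA1E0 x₀) x₀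
    simp only [Matrix.mul_apply, Matrix.smul_apply, smul_eq_mul, hE₀e] at h
    rw [← Finset.sum_mul] at h
    exact mul_right_cancel₀ (inv_ne_zero hvne) h
  have hA1sq : (A₁ * A₁) x₀ x₀ = k := by
    rw [Matrix.mul_apply]
    rw [← hrow]
    refine Finset.sum_congr rfl fun z _ => ?_
    have hz : A₁ z x₀ = A₁ x₀ z := by
      conv_lhs => rw [← h₁symm]
      rfl
    rw [hz]
    rcases h₁01 x₀ z with h | h <;> rw [h] <;> ring
  have eq3 : k * k * v⁻¹ + θ * θ * e₁ + τ * τ * e₂ = k := by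
    have hsqm : A₁ * A₁ = (k * k) • E₀ + (θ * θ) • E₁ + (τ * τ) • E₂ := by
      nth_rewrite 2 [hA₁E]
      rw [Matrix.mul_add, Matrix.mul_add, Matrix.mul_smul, Matrix.mul_smul,
        Matrix.mul_smul, hA1E0, hA1E1, hA1E2, smul_smul, smul_smul, smul_smul]
    have h := congrFun (congrFun hsqm x₀) x₀
    rw [hA1sq] at h
    simpa [Matrix.add_apply, Matrix.smul_apply, smul_eq_mul, hE₀e] using h.symm
  have hvv : v * v⁻¹ = 1 := mul_inv_cancel₀ hvne
  have hvk : v - 1 - k = k * b / c := by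
    rw [eq_div_iff hcne, hb, hc]
    linear_combination (-v) * eq3 + ((θ + τ) * v) * eq2 + (-(θ * τ * v)) * eq1 +
      ((k - θ) * (k - τ)) * hvv
  -- main statement
  intro i j hij
  have hA0m : ∀ m : Fin 3, ![A₀, A₁, A₂] 0 * ![E₀, E₁, E₂] m = ![E₀, E₁, E₂] m := by
    intro m
    show A₀ * _ = _
    rw [h0, one_mul]
  have hA1m : ∀ m : Fin 3, ![A₀, A₁, A₂] 1 * ![E₀, E₁, E₂] m
      = ![k, θ, τ] m • ![E₀, E₁, E₂] m := by
    intro m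
    fin_cases m
    · exact hA1E0
    · exact hA1E1
    · exact hA1E2
  have hA2m : ∀ m : Fin 3, ![A₀, A₁, A₂] 2 * ![E₀, E₁, E₂] m
      = ![v - 1 - k, -(θ + 1), -(τ + 1)] m • ![E₀, E₁, E₂] m := by
    intro m
    fin_cases m
    · exact hA2E0
    · exact hA2E1
    · exact hA2E2
  constructor
  · have h1 := SymAux.core ![A₀, A₁, A₂] ![E₀, E₁, E₂] ![k, θ, τ] 1 (by decide)
      hA0m hA1m N i j hij
    simpa using h1
  · have h2 := SymAux.core ![A₀, A₁, A₂] ![E₀, E₁, E₂] ![v - 1 - k, -(θ + 1), -(τ + 1)] 2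
      (by decide) hA0m hA2m N i j hij
    rw [show ((N:ℝ) - i - j) * (k * b / c) - i * (θ + 1) - j * (τ + 1)
      = ((N:ℝ) - i - j) * (v - 1 - k) + i * (-(θ + 1)) + j * (-(τ + 1)) from by
        rw [hvk]; ring]
    simpa using h2
end
end

section
/- Let A_0, A_1, A_2, A_3, A_4 be a symmetric association scheme with four classes (the generalized 24-cell), with parameter s such that (4s−1)(4s+1) ≠ 0, whose intersection numbers satisfy A_2 A_3 = (4s−1)(4s+1)(A_1 + A_3) and A_2² = 2(4s−1)(4s+1)(A_0 + A_4) + (32s²−4) A_2. Then, setting A_{00} = A_0, A_{10} = A_2, A_{01} = A_3, A_{11} = A_1, A_{20} = A_4, one has A_{11} = (1/((4s−1)(4s+1))) A_{01} A_{10} − A_{01} and A_{20} = (1/(2(4s−1)(4s+1))) A_{10}² − (2(8s²−1)/((4s−1)(4s+1))) A_{10} − A_{00}; hence each adjacency matrix is a bivariate polynomial in A_{10} and A_{01}, (1/2,0)-compatible of the corresponding degree. -/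
open Matrix Finset
open scoped Classical

noncomputable section

lemma mexp_fst (m n : ℕ) : mexp m n 0 = m := by
  simp [mexp, Finsupp.single_apply]

lemma mexp_snd (m n : ℕ) : mexp m n 1 = n := by
  simp [mexp, Finsupp.single_apply]

lemma mexp_inj {a b c d : ℕ} (h : mexp a b = mexp c d) : a = c ∧ b = d := by
  constructor
  · have := congrArg (fun f => f 0) h
    simpa [mexp_fst] using this
  · have := congrArg (fun f => f 1) h
    simpa [mexp_snd] using this

lemma evalMat_subset {V : Type*} [Fintype V] [DecidableEq V]
    (v : MvPolynomial (Fin 2) ℝ) (M N : Matrix V V ℝ) (T : Finset (Fin 2 →₀ ℕ))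
    (h : v.support ⊆ T) :
    evalMat v M N = ∑ d ∈ T, v.coeff d • (M ^ d 0 * N ^ d 1) := by
  unfold evalMat
  refine Finset.sum_subset h (fun d _ hd => ?_)
  simp [MvPolynomial.notMem_support_iff.mp hd]

lemma evalMat_add {V : Type*} [Fintype V] [DecidableEq V]
    (v w : MvPolynomial (Fin 2) ℝ) (M N : Matrix V V ℝ) :
    evalMat (v + w) M N = evalMat v M N + evalMat w M N := by
  rw [evalMat_subset (v + w) M N (v.support ∪ w.support)
      (MvPolynomial.support_add),
    evalMat_subset v M N (v.support ∪ w.support) (Finset.subset_union_left),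
    evalMat_subset w M N (v.support ∪ w.support) (Finset.subset_union_right),
    ← Finset.sum_add_distrib]
  refine Finset.sum_congr rfl fun d _ => ?_
  rw [MvPolynomial.coeff_add, add_smul]

lemma evalMat_monomial {V : Type*} [Fintype V] [DecidableEq V]
    (c : ℝ) (m n : ℕ) (M N : Matrix V V ℝ) :
    evalMat (MvPolynomial.monomial (mexp m n) c) M N = c • (M ^ m * N ^ n) := by
  rw [evalMat_subset _ M N {mexp m n} MvPolynomial.support_monomial_subset]
  simp [MvPolynomial.coeff_monomial, mexp_fst, mexp_snd]

/-- the generalized 24-cell scheme is bivariate P-polynomial of type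
(1/2,0): with A₀₀ = A₀, A₁₀ = A₂, A₀₁ = A₃, A₁₁ = A₁, A₂₀ = A₄, one has
A₁₁ = (1/((4s−1)(4s+1))) A₀₁A₁₀ − A₀₁ and
A₂₀ = (1/(2(4s−1)(4s+1))) A₁₀² − (2(8s²−1)/((4s−1)(4s+1))) A₁₀ − A₀₀, and each
adjacency matrix is a (1/2,0)-compatible bivariate polynomial in A₁₀, A₀₁ of the
corresponding degree. -/
theorem generalized_24cell_bivPPoly
    {V : Type*} [Fintype V] [DecidableEq V]
    (A₀ A₁ A₂ A₃ A₄ : Matrix V V ℝ)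
    -- symmetric association scheme axioms with four classes
    (hne : A₁ ≠ 0 ∧ A₂ ≠ 0 ∧ A₃ ≠ 0 ∧ A₄ ≠ 0)
    (h01 : ∀ B ∈ [A₀, A₁, A₂, A₃, A₄], ∀ x y, B x y = 0 ∨ B x y = 1)
    (h0 : A₀ = 1)
    (hsum : A₀ + A₁ + A₂ + A₃ + A₄ = Matrix.of fun _ _ => (1 : ℝ))
    (hsymm : ∀ B ∈ [A₀, A₁, A₂, A₃, A₄], Bᵀ = B)
    (hcomm : ∀ B ∈ [A₀, A₁, A₂, A₃, A₄], ∀ C ∈ [A₀, A₁, A₂, A₃, A₄], B * C = C * B)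
    -- parameter s with (4s−1)(4s+1) ≠ 0, and the relevant intersection relations
    (s : ℝ) (hs : (4 * s - 1) * (4 * s + 1) ≠ 0)
    (h23 : A₂ * A₃ = ((4 * s - 1) * (4 * s + 1)) • (A₁ + A₃))
    (h22 : A₂ * A₂ = (2 * (4 * s - 1) * (4 * s + 1)) • (A₀ + A₄)
      + (32 * s ^ 2 - 4) • A₂) :
    (A₁ = (1 / ((4 * s - 1) * (4 * s + 1))) • (A₃ * A₂) - A₃) ∧
    (A₄ = (1 / (2 * (4 * s - 1) * (4 * s + 1))) • (A₂ * A₂)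
      - (2 * (8 * s ^ 2 - 1) / ((4 * s - 1) * (4 * s + 1))) • A₂ - A₀) ∧
    (∀ p ∈ [((0, 0), A₀), ((1, 0), A₂), ((0, 1), A₃), ((1, 1), A₁), ((2, 0), A₄)],
      ∃ v : MvPolynomial (Fin 2) ℝ,
        CompatPoly (1/2) 0 p.1 v ∧ p.2 = evalMat v A₂ A₃) := by
  set c : ℝ := (4 * s - 1) * (4 * s + 1) with hc
  have hc2 : (2 : ℝ) * (4 * s - 1) * (4 * s + 1) = 2 * c := by ring
  have hcomm32 : A₃ * A₂ = A₂ * A₃ := by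
    have := hcomm A₃ (by simp) A₂ (by simp); exact this
  have key1 : A₁ = (1 / c) • (A₃ * A₂) - A₃ := by
    rw [hcomm32, h23, smul_smul, one_div, inv_mul_cancel₀ hs, one_smul]
    abel
  have escal : (1 : ℝ) / (2 * (4 * s - 1) * (4 * s + 1)) = 1 / (2 * c) := by
    rw [hc]; ring_nf
  have key2 : A₄ = (1 / (2 * (4 * s - 1) * (4 * s + 1))) • (A₂ * A₂)
      - (2 * (8 * s ^ 2 - 1) / c) • A₂ - A₀ := by
    rw [escal, h22, hc2, smul_add, smul_smul, smul_smul]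
    have e1 : (1 / (2 * c)) * (2 * c) = 1 := by
      field_simp
    have e2 : (1 / (2 * c)) * (32 * s ^ 2 - 4) = 2 * (8 * s ^ 2 - 1) / c := by
      field_simp; ring
    rw [e1, e2, one_smul]
    abel
  refine ⟨key1, key2, ?_⟩
  have hc' : (1 : ℝ) / c ≠ 0 := one_div_ne_zero hs
  have h2c : (2 : ℝ) * c ≠ 0 := mul_ne_zero two_ne_zero hs
  intro p hp
  fin_cases hp
  · -- (0,0), A₀
    refine ⟨MvPolynomial.monomial (mexp 0 0) 1, ⟨?_, ?_⟩, ?_⟩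
    · simp [MvPolynomial.coeff_monomial]
    · intro m n hmn
      simp only [MvPolynomial.coeff_monomial, ite_ne_right_iff] at hmn
      obtain ⟨hm, hn⟩ := mexp_inj hmn.1
      subst hm; subst hn
      norm_num [abLE]
    · rw [evalMat_monomial]; simp [h0]
  · -- (1,0), A₂
    refine ⟨MvPolynomial.monomial (mexp 1 0) 1, ⟨?_, ?_⟩, ?_⟩
    · simp [MvPolynomial.coeff_monomial]
    · intro m n hmn
      simp only [MvPolynomial.coeff_monomial, ite_ne_right_iff] at hmn
      obtain ⟨hm, hn⟩ := mexp_inj hmn.1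
      subst hm; subst hn
      norm_num [abLE]
    · rw [evalMat_monomial]; simp
  · -- (0,1), A₃
    refine ⟨MvPolynomial.monomial (mexp 0 1) 1, ⟨?_, ?_⟩, ?_⟩
    · simp [MvPolynomial.coeff_monomial]
    · intro m n hmn
      simp only [MvPolynomial.coeff_monomial, ite_ne_right_iff] at hmn
      obtain ⟨hm, hn⟩ := mexp_inj hmn.1
      subst hm; subst hn
      norm_num [abLE]
    · rw [evalMat_monomial]; simp
  · -- (1,1), A₁
    refine ⟨MvPolynomial.monomial (mexp 1 1) (1 / c)
        + MvPolynomial.monomial (mexp 0 1) (-1), ⟨?_, ?_⟩, ?_⟩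
    · have hne11 : mexp 0 1 ≠ mexp 1 1 := by
        intro h
        exact absurd (mexp_inj h).1 (by norm_num)
      simp only [MvPolynomial.coeff_add, MvPolynomial.coeff_monomial, if_pos rfl,
        if_neg hne11, add_zero]
      exact one_div_ne_zero hs
    · intro m n hmn
      simp only [MvPolynomial.coeff_add, MvPolynomial.coeff_monomial] at hmn
      by_cases h1 : mexp 1 1 = mexp m n
      · obtain ⟨hm, hn⟩ := mexp_inj h1
        subst hm; subst hn; norm_num [abLE]
      · by_cases h2 : mexp 0 1 = mexp m n
        · obtain ⟨hm, hn⟩ := mexp_inj h2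
          subst hm; subst hn; norm_num [abLE]
        · simp [h1, h2] at hmn
    · rw [evalMat_add, evalMat_monomial, evalMat_monomial]
      simp only [pow_one, pow_zero, one_mul, neg_smul, one_smul]
      rw [key1, hcomm32]
      abel
  · -- (2,0), A₄
    refine ⟨MvPolynomial.monomial (mexp 2 0) (1 / (2 * (4 * s - 1) * (4 * s + 1)))
        + MvPolynomial.monomial (mexp 1 0) (-(2 * (8 * s ^ 2 - 1) / c))
        + MvPolynomial.monomial (mexp 0 0) (-1), ⟨?_, ?_⟩, ?_⟩
    · have h1 : mexp 1 0 ≠ mexp 2 0 := by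
        intro h
        exact absurd (mexp_inj h).1 (by norm_num)
      have h2 : mexp 0 0 ≠ mexp 2 0 := by
        intro h
        exact absurd (mexp_inj h).1 (by norm_num)
      simp only [MvPolynomial.coeff_add, MvPolynomial.coeff_monomial, if_pos rfl,
        if_neg h1, if_neg h2, add_zero]
      rw [escal]
      exact one_div_ne_zero h2c
    · intro m n hmn
      simp only [MvPolynomial.coeff_add, MvPolynomial.coeff_monomial] at hmn
      by_cases h1 : mexp 2 0 = mexp m n
      · obtain ⟨hm, hn⟩ := mexp_inj h1
        subst hm; subst hn; norm_num [abLE]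
      · by_cases h2 : mexp 1 0 = mexp m n
        · obtain ⟨hm, hn⟩ := mexp_inj h2
          subst hm; subst hn; norm_num [abLE]
        · by_cases h3 : mexp 0 0 = mexp m n
          · obtain ⟨hm, hn⟩ := mexp_inj h3
            subst hm; subst hn; norm_num [abLE]
          · simp [h1, h2, h3] at hmn
    · rw [evalMat_add, evalMat_add, evalMat_monomial, evalMat_monomial,
        evalMat_monomial]
      simp only [pow_zero, pow_one, pow_two, one_mul, mul_one, neg_smul, one_smul]
      rw [key2, h0]
      module
end
end

section
/- Let r ≥ 3 and 0 ≤ k ≤ n, and let A_{ij} be the adjacency matrices of the non-binary Johnson scheme J_r(n,k), with the convention that A_{ij} = 0 when i < 0, j < 0, or the relation R_{ij} is empty. Then for all i,j ≥ 0: A_{10} A_{ij} = (k−i−j+1)(r−2) A_{i−1,j} + (i(r−3) + j(r−2)) A_{ij} + (i+1) A_{i+1,j}. -/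
open Matrix Finset
open scoped Classical

noncomputable section

/-- The weight of a vector: the number of non-zero components. -/
def nbjW {r n : ℕ} (x : Fin n → Fin r) : ℕ :=
  (Finset.univ.filter fun s => (x s).val ≠ 0).card

/-- The vertex set X of the non-binary Johnson scheme: vectors of weight k. -/
abbrev nbjX (r n k : ℕ) := {x : Fin n → Fin r // nbjW x = k}

/-- The number of equal non-zero components e(x,y). -/
def nbjE {r n : ℕ} (x y : Fin n → Fin r) : ℕ :=
  (Finset.univ.filter fun s => x s = y s ∧ (x s).val ≠ 0).card

/-- The number of common non-zeros c(x,y). -/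
def nbjC {r n : ℕ} (x y : Fin n → Fin r) : ℕ :=
  (Finset.univ.filter fun s => (x s).val ≠ 0 ∧ (y s).val ≠ 0).card

/-- The adjacency matrices of the non-binary Johnson scheme J_r(n,k):
(A_{ij})_{x,y} = 1 iff e(x,y) = k−i−j and c(x,y) = k−j (indices in ℤ; the matrix
is zero when the relation R_{ij} is empty, in particular when i < 0 or j < 0). -/
def nbjA (r n k : ℕ) (i j : ℤ) : Matrix (nbjX r n k) (nbjX r n k) ℝ :=
  Matrix.of fun x y =>
    if (nbjE x.1 y.1 : ℤ) = (k : ℤ) - i - j ∧ (nbjC x.1 y.1 : ℤ) = (k : ℤ) - j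
    then 1 else 0

section NbjAux
variable {r n : ℕ}

lemma card_filter_split (s : Fin n) (P : Fin n → Prop) [DecidablePred P] :
    (univ.filter P).card = (if P s then 1 else 0) + ((univ.erase s).filter P).card := by
  have h : (univ : Finset (Fin n)) = insert s (univ.erase s) := by
    rw [insert_erase (mem_univ s)]
  nth_rewrite 1 [h]
  rw [filter_insert]
  by_cases hP : P s
  · rw [if_pos hP, if_pos hP, card_insert_of_notMem (by simp), add_comm]
  · rw [if_neg hP, if_neg hP, zero_add]

lemma card_filter_exchange (s : Fin n) (P Q : Fin n → Prop) [DecidablePred P] [DecidablePred Q]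
    (h : ∀ t, t ≠ s → (P t ↔ Q t)) :
    (univ.filter P).card + (if Q s then 1 else 0)
      = (univ.filter Q).card + (if P s then 1 else 0) := by
  have hPQ : (univ.erase s).filter P = (univ.erase s).filter Q := by
    apply filter_congr
    intro t ht
    exact h t (mem_erase.mp ht).1
  rw [card_filter_split s P, card_filter_split s Q, hPQ]
  ring

variable {x y : Fin n → Fin r} {s : Fin n} {v : Fin r}

lemma nbjW_update (hv : v.val ≠ 0) (hx : (x s).val ≠ 0) :
    nbjW (Function.update x s v) = nbjW x := by
  unfold nbjW; congr 1
  apply filter_congr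
  intro t _
  by_cases h : t = s <;> simp [Function.update_apply, h, hv, hx]

lemma nbjC_update (hv : v.val ≠ 0) (hx : (x s).val ≠ 0) :
    nbjC (Function.update x s v) y = nbjC x y := by
  unfold nbjC; congr 1
  apply filter_congr
  intro t _
  by_cases h : t = s <;> simp [Function.update_apply, h, hv, hx]

lemma nbjE_update (hv : v.val ≠ 0) (hx : (x s).val ≠ 0) :
    nbjE (Function.update x s v) y + (if x s = y s then 1 else 0)
      = nbjE x y + (if v = y s then 1 else 0) := by
  unfold nbjE
  have h := card_filter_exchange s
    (fun t => Function.update x s v t = y t ∧ (Function.update x s v t).val ≠ 0)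
    (fun t => x t = y t ∧ (x t).val ≠ 0)
    (by intro t ht; simp [Function.update_apply, ht])
  have h1 : (if x s = y s ∧ (x s).val ≠ 0 then 1 else 0) = (if x s = y s then 1 else 0) := by
    simp [hx]
  have h2 : (if Function.update x s v s = y s ∧ (Function.update x s v s).val ≠ 0 then 1 else 0)
      = (if v = y s then 1 else 0) := by
    simp [hv]
  rw [h1, h2] at h
  exact h

end NbjAux

section Char
variable {r n k : ℕ}

lemma nbjE_le_nbjC (x y : Fin n → Fin r) : nbjE x y ≤ nbjC x y := by
  apply card_le_card
  intro t ht
  simp only [mem_filter, mem_univ, true_and] at ht ⊢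
  exact ⟨ht.2, ht.1 ▸ ht.2⟩

lemma R10_char (x : Fin n → Fin r) (hx : nbjW x = k) (z : Fin n → Fin r) :
    (nbjW z = k ∧ (nbjE x z : ℤ) = (k : ℤ) - 1 ∧ nbjC x z = k) ↔
      ∃ s, (x s).val ≠ 0 ∧ ∃ v : Fin r, v.val ≠ 0 ∧ v ≠ x s ∧ z = Function.update x s v := by
  constructor
  · rintro ⟨hz, he, hc⟩
    unfold nbjW at hx hz
    unfold nbjC at hc
    -- supports
    set Sx := univ.filter (fun t => (x t).val ≠ 0) with hSx
    set Sz := univ.filter (fun t => (z t).val ≠ 0) with hSz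
    set Cf := univ.filter (fun t => (x t).val ≠ 0 ∧ (z t).val ≠ 0) with hCf
    have hCx : Cf ⊆ Sx := by intro t ht; simp only [hCf, hSx, mem_filter] at *; tauto
    have hCz : Cf ⊆ Sz := by intro t ht; simp only [hCf, hSz, mem_filter] at *; tauto
    have hCfx : Cf = Sx := eq_of_subset_of_card_le hCx (by rw [hc]; exact le_of_eq hx)
    have hCfz : Cf = Sz := eq_of_subset_of_card_le hCz (by rw [hc]; exact le_of_eq hz)
    have hsupp : Sx = Sz := hCfx ▸ hCfz
    -- k ≥ 1 and e = k - 1 as naturals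
    have hk1 : 1 ≤ k := by omega
    have heN : nbjE x z = k - 1 := by omega
    -- the e-filter
    set Ef := univ.filter (fun t => x t = z t ∧ (x t).val ≠ 0) with hEf
    have hEsub : Ef ⊆ Sx := by intro t ht; simp only [hEf, hSx, mem_filter] at *; tauto
    have hcard : (Sx \ Ef).card = 1 := by
      rw [card_sdiff_of_subset hEsub]
      have : Sx.card = k := hx
      have : Ef.card = k - 1 := heN
      omega
    obtain ⟨s, hs⟩ := card_eq_one.mp hcard
    have hsmem : s ∈ Sx ∧ s ∉ Ef := by
      have : s ∈ Sx \ Ef := hs ▸ mem_singleton_self s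
      exact ⟨(mem_sdiff.mp this).1, (mem_sdiff.mp this).2⟩
    have hxs : (x s).val ≠ 0 := by
      have := hsmem.1; simp only [hSx, mem_filter] at this; exact this.2
    have hzs : (z s).val ≠ 0 := by
      have : s ∈ Sz := hsupp ▸ hsmem.1
      simp only [hSz, mem_filter] at this; exact this.2
    have hne : z s ≠ x s := by
      intro h
      exact hsmem.2 (by simp only [hEf, mem_filter]; exact ⟨mem_univ s, h.symm, hxs⟩)
    refine ⟨s, hxs, z s, hzs, hne, ?_⟩
    funext t
    by_cases hts : t = s
    · subst hts; simp
    · rw [Function.update_of_ne hts]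
      by_cases htS : t ∈ Sx
      · -- t ∈ Sx, t ≠ s → t ∈ Ef
        have htE : t ∈ Ef := by
          by_contra hE
          have : t ∈ Sx \ Ef := mem_sdiff.mpr ⟨htS, hE⟩
          rw [hs] at this
          exact hts (mem_singleton.mp this)
        simp only [hEf, mem_filter] at htE
        exact htE.2.1.symm
      · -- both zero
        have hxz : (x t).val = 0 := by
          simp only [hSx, mem_filter, mem_univ, true_and, not_not] at htS; exact htS
        have hzz : (z t).val = 0 := by
          have : t ∉ Sz := hsupp ▸ htS
          simp only [hSz, mem_filter, mem_univ, true_and, not_not] at this; exact this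
        exact Fin.ext (by rw [hzz, hxz])
  · rintro ⟨s, hxs, v, hv, hvx, rfl⟩
    have hxk : (univ.filter fun t => (x t).val ≠ 0).card = k := hx
    have hsmem : s ∈ univ.filter (fun t => (x t).val ≠ 0) := by simp [hxs]
    have hk1 : 1 ≤ k := by
      rw [← hx]; exact card_pos.mpr ⟨s, hsmem⟩
    refine ⟨by rw [nbjW_update hv hxs]; exact hx, ?_, ?_⟩
    · -- e(x, update x s v) = k - 1
      have hEf : (univ.filter fun t => x t = Function.update x s v t ∧ (x t).val ≠ 0)
          = (univ.filter fun t => (x t).val ≠ 0).erase s := by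
        ext t
        by_cases hts : t = s
        · subst hts; simp [hvx.symm]
        · simp [Function.update_of_ne hts, hts]
      have : nbjE x (Function.update x s v) = k - 1 := by
        unfold nbjE
        rw [hEf, card_erase_of_mem hsmem, hxk]
      rw [this]; push_cast; omega
    · -- c(x, update x s v) = k
      have hCf : (univ.filter fun t => (x t).val ≠ 0 ∧ (Function.update x s v t).val ≠ 0)
          = univ.filter fun t => (x t).val ≠ 0 := by
        apply filter_congr
        intro t _
        by_cases hts : t = s
        · subst hts; simp [hv, hxs]
        · simp [Function.update_of_ne hts]
      unfold nbjC
      rw [hCf, hxk]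

end Char

section Cards
variable {r : ℕ}

lemma card_ne2 (hr : 2 ≤ r) {a b : Fin r} (hab : a ≠ b) :
    (univ.filter fun v : Fin r => v ≠ a ∧ v ≠ b).card = r - 2 := by
  have h : (univ.filter fun v : Fin r => v ≠ a ∧ v ≠ b) = univ \ {a, b} := by
    ext v; simp [not_or]
  rw [h, card_sdiff_of_subset (subset_univ _), card_univ, Fintype.card_fin,
    card_insert_of_notMem (by simp [hab]), card_singleton]

lemma card_ne3 (hr : 3 ≤ r) {a b c : Fin r} (hab : a ≠ b) (hac : a ≠ c) (hbc : b ≠ c) :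
    (univ.filter fun v : Fin r => v ≠ a ∧ v ≠ b ∧ v ≠ c).card = r - 3 := by
  have h : (univ.filter fun v : Fin r => v ≠ a ∧ v ≠ b ∧ v ≠ c) = univ \ {a, b, c} := by
    ext v; simp [not_or]
  rw [h, card_sdiff_of_subset (subset_univ _), card_univ, Fintype.card_fin]
  rw [card_insert_of_notMem (by simp [hab, hac]),
    card_insert_of_notMem (by simp [hbc]), card_singleton]

lemma val_ne_iff (hr : 3 ≤ r) (v : Fin r) : v.val ≠ 0 ↔ v ≠ (⟨0, by omega⟩ : Fin r) := by
  constructor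
  · intro h h'; exact h (by rw [h'])
  · intro h h'; exact h (Fin.ext h')

end Cards

section MainCount
variable {r n k : ℕ}

lemma main_count (hr : 3 ≤ r) (x y : Fin n → Fin r) (hx : nbjW x = k) (t : ℤ) :
    ((univ.filter fun z : Fin n → Fin r =>
        (nbjW z = k ∧ (nbjE x z : ℤ) = (k : ℤ) - 1 ∧ nbjC x z = k) ∧ (nbjE z y : ℤ) = t).card : ℤ)
    = if (nbjE x y : ℤ) = t + 1 then (nbjE x y : ℤ) * ((r : ℤ) - 2)
      else if (nbjE x y : ℤ) = t then
        ((nbjC x y : ℤ) - nbjE x y) * ((r : ℤ) - 3) + ((k : ℤ) - nbjC x y) * ((r : ℤ) - 2)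
      else if (nbjE x y : ℤ) = t - 1 then (nbjC x y : ℤ) - nbjE x y
      else 0 := by
  classical
  set e0 := nbjE x y with he0
  set c0 := nbjC x y with hc0
  set Sx := univ.filter (fun s : Fin n => (x s).val ≠ 0) with hSx
  set V : Fin n → Finset (Fin r) := fun s => univ.filter fun v =>
    v.val ≠ 0 ∧ v ≠ x s ∧ (nbjE (Function.update x s v) y : ℤ) = t with hV
  -- Step 1 : the filter is a disjoint union
  have hstep1 : (univ.filter fun z : Fin n → Fin r =>
      (nbjW z = k ∧ (nbjE x z : ℤ) = (k : ℤ) - 1 ∧ nbjC x z = k) ∧ (nbjE z y : ℤ) = t)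
      = Sx.biUnion (fun s => (V s).image (Function.update x s)) := by
    ext z
    simp only [mem_filter, mem_univ, true_and, mem_biUnion, mem_image, hSx, hV]
    constructor
    · rintro ⟨h10, ht⟩
      obtain ⟨s, hxs, v, hv, hvx, rfl⟩ := (R10_char x hx z).mp h10
      exact ⟨s, by simp [hxs], v, by simp [hv, hvx, ht], rfl⟩
    · rintro ⟨s, hs, v, hvmem, rfl⟩
      have hs' : (x s).val ≠ 0 := by simpa using hs
      have hvmem' : v.val ≠ 0 ∧ v ≠ x s ∧ (nbjE (Function.update x s v) y : ℤ) = t := by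
        simpa using hvmem
      obtain ⟨hv, hvx, ht⟩ := hvmem'
      exact ⟨(R10_char x hx _).mpr ⟨s, hs', v, hv, hvx, rfl⟩, ht⟩
  -- Step 2 : the cardinality is the sum of the fibers
  have hstep2 : (univ.filter fun z : Fin n → Fin r =>
      (nbjW z = k ∧ (nbjE x z : ℤ) = (k : ℤ) - 1 ∧ nbjC x z = k) ∧ (nbjE z y : ℤ) = t).card
      = ∑ s ∈ Sx, (V s).card := by
    rw [hstep1, card_biUnion]
    · apply sum_congr rfl
      intro s _
      apply card_image_of_injective
      intro v w hvw
      have := congrFun hvw s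
      simpa using this
    · intro s1 hs1 s2 hs2 h12
      simp only [hSx, mem_coe, mem_filter, mem_univ, true_and] at hs1 hs2
      apply disjoint_left.mpr
      intro z hz1 hz2
      simp only [mem_image] at hz1 hz2
      obtain ⟨v1, hv1, rfl⟩ := hz1
      obtain ⟨v2, hv2, heq⟩ := hz2
      simp only [hV, mem_filter, mem_univ, true_and] at hv1 hv2
      have := congrFun heq s1
      rw [Function.update_self, Function.update_of_ne h12] at this
      exact hv1.2.1 this.symm
  -- per-class fiber cardinalities
  have hz0 : ((⟨0, by omega⟩ : Fin r) : Fin r).val = 0 := rfl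
  have hVA : ∀ s ∈ Sx, x s = y s →
      ((V s).card : ℤ) = if (e0 : ℤ) = t + 1 then (r : ℤ) - 2 else 0 := by
    intro s hs hxy
    have hxs : (x s).val ≠ 0 := by simp only [hSx, mem_filter] at hs; exact hs.2
    have hmem : ∀ v : Fin r, v ∈ V s ↔ (v.val ≠ 0 ∧ v ≠ x s) ∧ (e0 : ℤ) = t + 1 := by
      intro v
      simp only [hV, mem_filter, mem_univ, true_and]
      constructor
      · rintro ⟨h1, h2, h3⟩
        have hEu := nbjE_update (y := y) (v := v) (s := s) h1 hxs
        rw [if_pos hxy, if_neg (by rw [← hxy]; exact h2)] at hEu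
        exact ⟨⟨h1, h2⟩, by omega⟩
      · rintro ⟨⟨h1, h2⟩, h3⟩
        have hEu := nbjE_update (y := y) (v := v) (s := s) h1 hxs
        rw [if_pos hxy, if_neg (by rw [← hxy]; exact h2)] at hEu
        exact ⟨h1, h2, by omega⟩
    by_cases he : (e0 : ℤ) = t + 1
    · rw [if_pos he]
      have : V s = univ.filter fun v : Fin r => v ≠ ⟨0, by omega⟩ ∧ v ≠ x s := by
        ext v
        rw [hmem v]
        simp [he, val_ne_iff hr]
      rw [this, card_ne2 (by omega) (fun h => hxs (by rw [← h]))]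
      omega
    · rw [if_neg he]
      have : V s = ∅ := by
        ext v; rw [hmem v]; simp [he]
      rw [this]; simp
  have hVB : ∀ s ∈ Sx, (y s).val ≠ 0 → x s ≠ y s →
      ((V s).card : ℤ) = if (e0 : ℤ) = t then (r : ℤ) - 3
        else if (e0 : ℤ) = t - 1 then 1 else 0 := by
    intro s hs hys hxy
    have hxs : (x s).val ≠ 0 := by simp only [hSx, mem_filter] at hs; exact hs.2
    have hmem : ∀ v : Fin r, v ∈ V s ↔ (v.val ≠ 0 ∧ v ≠ x s) ∧
        ((v = y s ∧ (e0 : ℤ) = t - 1) ∨ (v ≠ y s ∧ (e0 : ℤ) = t)) := by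
      intro v
      simp only [hV, mem_filter, mem_univ, true_and]
      constructor
      · rintro ⟨h1, h2, h3⟩
        have hEu := nbjE_update (y := y) (v := v) (s := s) h1 hxs
        rw [if_neg hxy] at hEu
        refine ⟨⟨h1, h2⟩, ?_⟩
        by_cases hvy : v = y s
        · rw [if_pos hvy] at hEu; exact Or.inl ⟨hvy, by omega⟩
        · rw [if_neg hvy] at hEu; exact Or.inr ⟨hvy, by omega⟩
      · rintro ⟨⟨h1, h2⟩, hcase⟩
        have hEu := nbjE_update (y := y) (v := v) (s := s) h1 hxs
        rw [if_neg hxy] at hEu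
        refine ⟨h1, h2, ?_⟩
        rcases hcase with ⟨hvy, he⟩ | ⟨hvy, he⟩
        · rw [if_pos hvy] at hEu; omega
        · rw [if_neg hvy] at hEu; omega
    by_cases he1 : (e0 : ℤ) = t
    · rw [if_pos he1]
      have : V s = univ.filter fun v : Fin r => v ≠ ⟨0, by omega⟩ ∧ v ≠ x s ∧ v ≠ y s := by
        ext v
        rw [hmem v]
        have : (e0 : ℤ) ≠ t - 1 := by omega
        simp only [val_ne_iff hr, mem_filter, mem_univ, true_and]
        tauto
      rw [this, card_ne3 hr (fun h => hxs (by rw [← h])) (fun h => hys (by rw [← h]))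
        hxy]
      omega
    · rw [if_neg he1]
      by_cases he2 : (e0 : ℤ) = t - 1
      · rw [if_pos he2]
        have : V s = {y s} := by
          ext v
          rw [hmem v]
          simp only [mem_singleton]
          constructor
          · rintro ⟨_, h⟩
            rcases h with ⟨h, _⟩ | ⟨_, h⟩
            · exact h
            · omega
          · rintro rfl
            exact ⟨⟨hys, fun h => hxy h.symm⟩, Or.inl ⟨rfl, he2⟩⟩
        rw [this]; simp
      · rw [if_neg he2]
        have : V s = ∅ := by
          ext v; rw [hmem v]; simp; tauto
        rw [this]; simp
  have hVC : ∀ s ∈ Sx, (y s).val = 0 →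
      ((V s).card : ℤ) = if (e0 : ℤ) = t then (r : ℤ) - 2 else 0 := by
    intro s hs hys
    have hxs : (x s).val ≠ 0 := by simp only [hSx, mem_filter] at hs; exact hs.2
    have hxy : x s ≠ y s := fun h => hxs (by rw [h, hys])
    have hmem : ∀ v : Fin r, v ∈ V s ↔ (v.val ≠ 0 ∧ v ≠ x s) ∧ (e0 : ℤ) = t := by
      intro v
      simp only [hV, mem_filter, mem_univ, true_and]
      constructor
      · rintro ⟨h1, h2, h3⟩
        have hEu := nbjE_update (y := y) (v := v) (s := s) h1 hxs
        rw [if_neg hxy, if_neg (fun h => h1 (by rw [h, hys]))] at hEu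
        exact ⟨⟨h1, h2⟩, by omega⟩
      · rintro ⟨⟨h1, h2⟩, h3⟩
        have hEu := nbjE_update (y := y) (v := v) (s := s) h1 hxs
        rw [if_neg hxy, if_neg (fun h => h1 (by rw [h, hys]))] at hEu
        exact ⟨h1, h2, by omega⟩
    by_cases he : (e0 : ℤ) = t
    · rw [if_pos he]
      have : V s = univ.filter fun v : Fin r => v ≠ ⟨0, by omega⟩ ∧ v ≠ x s := by
        ext v
        rw [hmem v]
        simp [he, val_ne_iff hr]
      rw [this, card_ne2 (by omega) (fun h => hxs (by rw [← h]))]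
      omega
    · rw [if_neg he]
      have : V s = ∅ := by
        ext v; rw [hmem v]; simp [he]
      rw [this]; simp
  -- class cardinalities
  have hsub1 : (univ.filter fun s : Fin n => x s = y s ∧ (x s).val ≠ 0) ⊆
      (univ.filter fun s : Fin n => (x s).val ≠ 0 ∧ (y s).val ≠ 0) := by
    intro s hs
    simp only [mem_filter, mem_univ, true_and] at hs ⊢
    exact ⟨hs.2, hs.1 ▸ hs.2⟩
  have hsub2 : (univ.filter fun s : Fin n => (x s).val ≠ 0 ∧ (y s).val ≠ 0) ⊆ Sx := by
    intro s hs
    simp only [hSx, mem_filter, mem_univ, true_and] at hs ⊢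
    exact hs.1
  have hAcard : ((Sx.filter fun s => x s = y s).card : ℤ) = (e0 : ℤ) := by
    congr 1
    rw [he0]; unfold nbjE; congr 1
    ext s
    simp only [hSx, mem_filter, mem_univ, true_and]
    tauto
  have hBcard : (((Sx.filter fun s => ¬ x s = y s).filter fun s => (y s).val ≠ 0).card : ℤ)
      = (c0 : ℤ) - (e0 : ℤ) := by
    have hBeq : ((Sx.filter fun s => ¬ x s = y s).filter fun s => (y s).val ≠ 0)
        = (univ.filter fun s : Fin n => (x s).val ≠ 0 ∧ (y s).val ≠ 0) \
          (univ.filter fun s : Fin n => x s = y s ∧ (x s).val ≠ 0) := by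
      ext s
      simp only [hSx, mem_filter, mem_univ, true_and, mem_sdiff]
      tauto
    rw [hBeq, card_sdiff_of_subset hsub1]
    have h1 : (univ.filter fun s : Fin n => (x s).val ≠ 0 ∧ (y s).val ≠ 0).card = c0 := rfl
    have h2 : (univ.filter fun s : Fin n => x s = y s ∧ (x s).val ≠ 0).card = e0 := rfl
    have h3 : e0 ≤ c0 := nbjE_le_nbjC x y
    rw [h1, h2]
    omega
  have hCcard : (((Sx.filter fun s => ¬ x s = y s).filter fun s => ¬ (y s).val ≠ 0).card : ℤ)
      = (k : ℤ) - (c0 : ℤ) := by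
    have hCeq : ((Sx.filter fun s => ¬ x s = y s).filter fun s => ¬ (y s).val ≠ 0)
        = Sx \ (univ.filter fun s : Fin n => (x s).val ≠ 0 ∧ (y s).val ≠ 0) := by
      ext s
      simp only [hSx, mem_filter, mem_univ, true_and, mem_sdiff, not_not, not_and]
      constructor
      · rintro ⟨⟨h1, _⟩, h3⟩
        exact ⟨h1, fun _ => h3⟩
      · rintro ⟨h1, h2⟩
        have h3 := h2 h1
        exact ⟨⟨h1, fun h => h1 (by rw [h, h3])⟩, h3⟩
    rw [hCeq, card_sdiff_of_subset hsub2]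
    have h1 : (univ.filter fun s : Fin n => (x s).val ≠ 0 ∧ (y s).val ≠ 0).card = c0 := rfl
    have hle : c0 ≤ Sx.card := h1 ▸ card_le_card hsub2
    have hxk : Sx.card = k := hx
    rw [h1, hxk]
    omega
  -- assemble
  rw [hstep2, Nat.cast_sum]
  rw [← sum_filter_add_sum_filter_not Sx (fun s => x s = y s)]
  rw [← sum_filter_add_sum_filter_not (Sx.filter fun s => ¬ x s = y s)
    (fun s => (y s).val ≠ 0)]
  have hA : ∑ s ∈ Sx.filter (fun s => x s = y s), ((V s).card : ℤ)
      = (e0 : ℤ) * (if (e0 : ℤ) = t + 1 then (r : ℤ) - 2 else 0) := by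
    rw [sum_congr rfl (fun s hs => hVA s (mem_of_mem_filter s hs)
      (mem_filter.mp hs).2), sum_const, nsmul_eq_mul, hAcard]
  have hB : ∑ s ∈ (Sx.filter fun s => ¬ x s = y s).filter (fun s => (y s).val ≠ 0),
      ((V s).card : ℤ)
      = ((c0 : ℤ) - e0) * (if (e0 : ℤ) = t then (r : ℤ) - 3
          else if (e0 : ℤ) = t - 1 then 1 else 0) := by
    rw [sum_congr rfl (fun s hs => hVB s
        (mem_of_mem_filter s (mem_of_mem_filter s hs))
        (mem_filter.mp hs).2 (mem_filter.mp (mem_of_mem_filter s hs)).2),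
      sum_const, nsmul_eq_mul, hBcard]
  have hC : ∑ s ∈ (Sx.filter fun s => ¬ x s = y s).filter (fun s => ¬ (y s).val ≠ 0),
      ((V s).card : ℤ)
      = ((k : ℤ) - c0) * (if (e0 : ℤ) = t then (r : ℤ) - 2 else 0) := by
    rw [sum_congr rfl (fun s hs => hVC s
        (mem_of_mem_filter s (mem_of_mem_filter s hs))
        (not_not.mp (mem_filter.mp hs).2)),
      sum_const, nsmul_eq_mul, hCcard]
  rw [hA, hB, hC]
  by_cases h1 : (e0 : ℤ) = t + 1
  · simp only [if_pos h1, if_neg (show ¬(e0 : ℤ) = t by omega),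
      if_neg (show ¬(e0 : ℤ) = t - 1 by omega)]
    ring
  · by_cases h2 : (e0 : ℤ) = t
    · simp only [if_neg h1, if_pos h2]
      ring
    · by_cases h3 : (e0 : ℤ) = t - 1
      · simp only [if_neg h1, if_neg h2, if_pos h3]
        ring
      · simp only [if_neg h1, if_neg h2, if_neg h3]
        ring

end MainCount

section Glue
variable {r n k : ℕ}

lemma card_subtype_filter {α : Type*} [Fintype α] (p q : α → Prop)
    [DecidablePred p] [DecidablePred q] [DecidablePred (fun z : {a : α // p a} => q z.1)] :
    (univ.filter fun z : {a : α // p a} => q z.1).card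
      = (univ.filter fun z : α => p z ∧ q z).card := by
  classical
  apply card_bij (fun (z : {a : α // p a}) (_ : z ∈ univ.filter fun z : {a : α // p a} => q z.1) => z.1)
  · intro a ha
    simp only [mem_filter, mem_univ, true_and] at ha ⊢
    exact ⟨a.2, ha⟩
  · intro a _ b _ h
    exact Subtype.ext h
  · intro b hb
    simp only [mem_filter, mem_univ, true_and] at hb
    exact ⟨⟨b, hb.1⟩, by simp [hb.2], rfl⟩

lemma nbj_ite_one_mul (P Q : Prop) [Decidable P] [Decidable Q] :
    (if P then (1 : ℝ) else 0) * (if Q then (1 : ℝ) else 0)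
      = if P ∧ Q then (1 : ℝ) else 0 := by
  by_cases hP : P <;> by_cases hQ : Q <;> simp [hP, hQ]

end Glue


/-- the recurrence A₁₀A_{ij} for the non-binary Johnson scheme. -/
theorem nbj_recurrence_A10 (r n k : ℕ) (hr : 3 ≤ r) (hn : 1 ≤ n) (hk : k ≤ n) :
    ∀ i j : ℕ,
      nbjA r n k 1 0 * nbjA r n k i j =
        (((k : ℝ) - i - j + 1) * ((r : ℝ) - 2)) • nbjA r n k ((i : ℤ) - 1) j +
        ((i : ℝ) * ((r : ℝ) - 3) + (j : ℝ) * ((r : ℝ) - 2)) • nbjA r n k i j +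
        ((i : ℝ) + 1) • nbjA r n k ((i : ℤ) + 1) j := by
  intro i j
  ext x y
  rw [Matrix.mul_apply]
  simp only [Matrix.add_apply, Matrix.smul_apply, smul_eq_mul, nbjA, Matrix.of_apply]
  -- rewrite the summand
  have hsum : ∀ z : nbjX r n k,
      (if (nbjE x.1 z.1 : ℤ) = (k : ℤ) - 1 - 0 ∧ (nbjC x.1 z.1 : ℤ) = (k : ℤ) - 0
        then (1 : ℝ) else 0) *
      (if (nbjE z.1 y.1 : ℤ) = (k : ℤ) - i - j ∧ (nbjC z.1 y.1 : ℤ) = (k : ℤ) - j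
        then (1 : ℝ) else 0)
      = if (((nbjE x.1 z.1 : ℤ) = (k : ℤ) - 1 ∧ nbjC x.1 z.1 = k) ∧
            ((nbjE z.1 y.1 : ℤ) = (k : ℤ) - i - j ∧ (nbjC z.1 y.1 : ℤ) = (k : ℤ) - j))
        then (1 : ℝ) else 0 := by
    intro z
    rw [nbj_ite_one_mul]
    apply if_congr _ rfl rfl
    constructor
    · rintro ⟨⟨ha, hb⟩, hcnd⟩
      exact ⟨⟨by omega, by omega⟩, hcnd⟩
    · rintro ⟨⟨ha, hb⟩, hcnd⟩
      exact ⟨⟨by omega, by omega⟩, hcnd⟩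
  rw [Finset.sum_congr rfl (fun z _ => hsum z), Finset.sum_boole]
  rw [card_subtype_filter (fun a => nbjW a = k)
    (fun z => ((nbjE x.1 z : ℤ) = (k : ℤ) - 1 ∧ nbjC x.1 z = k) ∧
      ((nbjE z y.1 : ℤ) = (k : ℤ) - i - j ∧ (nbjC z y.1 : ℤ) = (k : ℤ) - j))]
  by_cases hc : (nbjC x.1 y.1 : ℤ) = (k : ℤ) - j
  · -- the c-condition is automatic; reduce to main_count
    have hfeq : (univ.filter fun z : Fin n → Fin r => nbjW z = k ∧
          ((nbjE x.1 z : ℤ) = (k : ℤ) - 1 ∧ nbjC x.1 z = k) ∧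
          ((nbjE z y.1 : ℤ) = (k : ℤ) - i - j ∧ (nbjC z y.1 : ℤ) = (k : ℤ) - j))
        = univ.filter fun z : Fin n → Fin r =>
          (nbjW z = k ∧ (nbjE x.1 z : ℤ) = (k : ℤ) - 1 ∧ nbjC x.1 z = k) ∧
          (nbjE z y.1 : ℤ) = (k : ℤ) - i - j := by
      apply filter_congr
      intro z _
      constructor
      · rintro ⟨h1, h2, h3, _⟩
        exact ⟨⟨h1, h2.1, h2.2⟩, h3⟩
      · rintro ⟨⟨h1, h2, h3⟩, h4⟩
        refine ⟨h1, ⟨h2, h3⟩, h4, ?_⟩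
        obtain ⟨s, hxs, v, hv, hvx, rfl⟩ := (R10_char x.1 x.2 z).mp ⟨h1, h2, h3⟩
        rw [nbjC_update hv hxs]
        exact hc
    rw [hfeq]
    have key := main_count (n := n) (k := k) hr x.1 y.1 x.2 ((k : ℤ) - i - j)
    by_cases h1 : (nbjE x.1 y.1 : ℤ) = ((k : ℤ) - i - j) + 1
    · rw [if_pos h1] at key
      have h1' : (nbjE x.1 y.1 : ℤ) = (k : ℤ) - ((i : ℤ) - 1) - j := by omega
      rw [if_pos ⟨h1', hc⟩, if_neg (by rintro ⟨h, -⟩; omega),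
        if_neg (by rintro ⟨h, -⟩; omega)]
      have hcast := congrArg (fun z : ℤ => (z : ℝ)) key
      push_cast at hcast ⊢
      rw [hcast]
      have hE : (nbjE x.1 y.1 : ℝ) = (k : ℝ) - i - j + 1 := by
        have := congrArg (fun z : ℤ => (z : ℝ)) h1
        push_cast at this
        linarith
      rw [hE]
      ring
    · by_cases h2 : (nbjE x.1 y.1 : ℤ) = (k : ℤ) - i - j
      · rw [if_neg h1, if_pos h2] at key
        rw [if_neg (by rintro ⟨h, -⟩; omega), if_pos ⟨h2, hc⟩,
          if_neg (by rintro ⟨h, -⟩; omega)]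
        have hcast := congrArg (fun z : ℤ => (z : ℝ)) key
        push_cast at hcast ⊢
        rw [hcast]
        have hE : (nbjE x.1 y.1 : ℝ) = (k : ℝ) - i - j := by
          have := congrArg (fun z : ℤ => (z : ℝ)) h2
          push_cast at this
          linarith
        have hC : (nbjC x.1 y.1 : ℝ) = (k : ℝ) - j := by
          have := congrArg (fun z : ℤ => (z : ℝ)) hc
          push_cast at this
          linarith
        rw [hE, hC]
        ring
      · by_cases h3 : (nbjE x.1 y.1 : ℤ) = ((k : ℤ) - i - j) - 1
        · rw [if_neg h1, if_neg h2, if_pos h3] at key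
          have h3' : (nbjE x.1 y.1 : ℤ) = (k : ℤ) - ((i : ℤ) + 1) - j := by omega
          rw [if_neg (by rintro ⟨h, -⟩; omega), if_neg (by rintro ⟨h, -⟩; omega),
            if_pos ⟨h3', hc⟩]
          have hcast := congrArg (fun z : ℤ => (z : ℝ)) key
          push_cast at hcast ⊢
          rw [hcast]
          have hE : (nbjE x.1 y.1 : ℝ) = (k : ℝ) - i - j - 1 := by
            have := congrArg (fun z : ℤ => (z : ℝ)) h3
            push_cast at this
            linarith
          have hC : (nbjC x.1 y.1 : ℝ) = (k : ℝ) - j := by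
            have := congrArg (fun z : ℤ => (z : ℝ)) hc
            push_cast at this
            linarith
          rw [hE, hC]
          ring
        · rw [if_neg h1, if_neg h2, if_neg h3] at key
          rw [if_neg (by rintro ⟨h, -⟩; omega), if_neg (by rintro ⟨h, -⟩; omega),
            if_neg (by rintro ⟨h, -⟩; omega)]
          have hcast := congrArg (fun z : ℤ => (z : ℝ)) key
          push_cast at hcast ⊢
          rw [hcast]
          ring
  · -- the c-condition fails everywhere: both sides vanish
    have hfeq : (univ.filter fun z : Fin n → Fin r => nbjW z = k ∧
          ((nbjE x.1 z : ℤ) = (k : ℤ) - 1 ∧ nbjC x.1 z = k) ∧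
          ((nbjE z y.1 : ℤ) = (k : ℤ) - i - j ∧ (nbjC z y.1 : ℤ) = (k : ℤ) - j))
        = ∅ := by
      rw [Finset.eq_empty_iff_forall_notMem]
      intro z hz
      simp only [mem_filter, mem_univ, true_and] at hz
      obtain ⟨h1, ⟨h2, h3⟩, _, h5⟩ := hz
      obtain ⟨s, hxs, v, hv, hvx, rfl⟩ := (R10_char x.1 x.2 z).mp ⟨h1, h2, h3⟩
      rw [nbjC_update hv hxs] at h5
      exact hc h5
    rw [hfeq]
    rw [if_neg (by rintro ⟨-, h⟩; exact hc h), if_neg (by rintro ⟨-, h⟩; exact hc h),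
      if_neg (by rintro ⟨-, h⟩; exact hc h)]
    simp
end
end

section
/- Let r ≥ 3 and 0 ≤ k ≤ n, and let A_{ij} be the adjacency matrices of the non-binary Johnson scheme J_r(n,k), with the convention that A_{ij} = 0 when i < 0, j < 0, or the relation R_{ij} is empty. Then for all i,j ≥ 0: A_{01} A_{ij} = (k−i−j+1)(r−2)j A_{i−1,j} + (k−i−j+1)(n−k−j+1)(r−1) A_{i,j−1} + (i+1)j A_{i+1,j} + (j+1)² A_{i,j+1} + (i+1)(n−k−j+1)(r−1) A_{i+1,j−1} + (j+1)²(r−2) A_{i−1,j+1} + j(k−i−j + (r−2)i + (n−k−j)(r−1)) A_{ij}. -/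
open Matrix Finset
open scoped Classical

noncomputable section

/-- move the nonzero entry at `s` to position `t` with value `v` -/
def nbjU {r n : ℕ} (x : Fin n → Fin r) (s t : Fin n) (v : Fin r) : Fin n → Fin r :=
  fun u => if u = t then v else if u = s then x t else x u

section U
variable {r n : ℕ} (x y : Fin n → Fin r) (s t : Fin n) (v : Fin r)
variable (hs : (x s).val ≠ 0) (ht : (x t).val = 0) (hv : v.val ≠ 0)

lemma nbjU_t : nbjU x s t v t = v := by simp [nbjU]

include hs ht in
lemma hst : s ≠ t := fun h => hs (h ▸ ht)

include hs ht in
lemma nbjU_s : (nbjU x s t v s).val = 0 := by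
  have h := hst x s t hs ht
  simp [nbjU, h, (Ne.symm h)]
  exact ht

lemma nbjU_other (u : Fin n) (hus : u ≠ s) (hut : u ≠ t) : nbjU x s t v u = x u := by
  simp [nbjU, hus, hut]

lemma card_surgery {α : Type*} [DecidableEq α] (F : Finset α) (s t : α) (hst : s ≠ t)
    (ht : t ∉ F) (P : Prop) [Decidable P] :
    (((F.erase s) ∪ (if P then {t} else ∅)).card : ℤ)
      = (F.card : ℤ) - (if s ∈ F then 1 else 0) + (if P then 1 else 0) := by
  have hdisj : Disjoint (F.erase s) (if P then ({t} : Finset α) else ∅) := by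
    by_cases hP : P <;> simp [hP]
    intro h; exact ht
  rw [Finset.card_union_of_disjoint hdisj]
  by_cases hsF : s ∈ F
  · have h1 : 1 ≤ F.card := Finset.one_le_card.mpr ⟨s, hsF⟩
    rw [Finset.card_erase_of_mem hsF]
    by_cases hP : P <;> simp [hP, hsF] <;> omega
  · rw [Finset.erase_eq_of_notMem hsF]
    by_cases hP : P <;> simp [hP, hsF]

end U

section Filters
variable {r n : ℕ} (x y : Fin n → Fin r) (s t : Fin n) (v : Fin r)

lemma filt_w (hs : (x s).val ≠ 0) (ht : (x t).val = 0) (hv : v.val ≠ 0) :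
    (Finset.univ.filter fun u => ((nbjU x s t v u)).val ≠ 0)
      = ((Finset.univ.filter fun u => (x u).val ≠ 0).erase s) ∪ {t} := by
  have h := hst x s t hs ht
  ext u
  simp only [Finset.mem_filter]
  by_cases hut : u = t
  · subst hut; simp [nbjU, hv, Ne.symm h]
  · by_cases hus : u = s
    · subst hus; simp [nbjU, h, Ne.symm h, ht, hut]
    · simp [nbjU, hus, hut]

lemma filt_ex (hs : (x s).val ≠ 0) (ht : (x t).val = 0) (hv : v.val ≠ 0) :
    (Finset.univ.filter fun u => x u = nbjU x s t v u ∧ (x u).val ≠ 0)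
      = (Finset.univ.filter fun u => (x u).val ≠ 0).erase s := by
  have h := hst x s t hs ht
  ext u
  simp only [Finset.mem_filter]
  by_cases hut : u = t
  · subst hut; simp [nbjU, ht, Ne.symm h]
  · by_cases hus : u = s
    · subst hus
      simp [nbjU, h, hut, hs]
      intro heq; rw [heq] at hs; exact hs ht
    · simp [nbjU, hus, hut]

lemma filt_cx (hs : (x s).val ≠ 0) (ht : (x t).val = 0) (hv : v.val ≠ 0) :
    (Finset.univ.filter fun u => (x u).val ≠ 0 ∧ ((nbjU x s t v u)).val ≠ 0)
      = (Finset.univ.filter fun u => (x u).val ≠ 0).erase s := by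
  have h := hst x s t hs ht
  ext u
  simp only [Finset.mem_filter]
  by_cases hut : u = t
  · subst hut; simp [nbjU, ht, Ne.symm h]
  · by_cases hus : u = s
    · subst hus; simp [nbjU, h, hut, ht]
    · simp [nbjU, hus, hut]

lemma filt_ey (hs : (x s).val ≠ 0) (ht : (x t).val = 0) (hv : v.val ≠ 0) :
    (Finset.univ.filter fun u => nbjU x s t v u = y u ∧ ((nbjU x s t v u)).val ≠ 0)
      = ((Finset.univ.filter fun u => x u = y u ∧ (x u).val ≠ 0).erase s)
          ∪ (if v = y t then {t} else ∅) := by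
  have h := hst x s t hs ht
  have h0 : (nbjU x s t v s).val = 0 := nbjU_s x s t v hs ht
  ext u
  simp only [Finset.mem_filter]
  by_cases hut : u = t
  · subst hut
    by_cases hvy : v = y u
    · rw [if_pos hvy]
      simp [nbjU, hvy, Ne.symm h, ht]
      exact hvy ▸ hv
    · rw [if_neg hvy]
      simp [nbjU, hvy, Ne.symm h, ht]
  · by_cases hus : u = s
    · by_cases hvy : v = y t <;>
        [rw [if_pos hvy]; rw [if_neg hvy]] <;> simp [hus, h, h0, hut]
    · by_cases hvy : v = y t <;>
        [rw [if_pos hvy]; rw [if_neg hvy]] <;> simp [nbjU, hus, hut]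

lemma filt_cy (hs : (x s).val ≠ 0) (ht : (x t).val = 0) (hv : v.val ≠ 0) :
    (Finset.univ.filter fun u => ((nbjU x s t v u)).val ≠ 0 ∧ (y u).val ≠ 0)
      = ((Finset.univ.filter fun u => (x u).val ≠ 0 ∧ (y u).val ≠ 0).erase s)
          ∪ (if (y t).val ≠ 0 then {t} else ∅) := by
  have h := hst x s t hs ht
  have h0 : (nbjU x s t v s).val = 0 := nbjU_s x s t v hs ht
  ext u
  simp only [Finset.mem_filter]
  by_cases hut : u = t
  · subst hut
    by_cases hyt : (y u).val ≠ 0 <;> simp [nbjU, hv, hyt, Ne.symm h, ht]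
  · by_cases hus : u = s
    · by_cases hyt : (y t).val ≠ 0 <;> simp [hus, hyt, h, h0, hut]
    · by_cases hyt : (y t).val ≠ 0 <;> simp [nbjU, hus, hut, hyt]

end Filters

section Cards
variable {r n : ℕ} (x y : Fin n → Fin r) (s t : Fin n) (v : Fin r)
variable (hs : (x s).val ≠ 0) (ht : (x t).val = 0) (hv : v.val ≠ 0)

include hs ht hv

lemma smem : s ∈ Finset.univ.filter fun u => (x u).val ≠ 0 := by simp [hs]

lemma tnotmem : t ∉ Finset.univ.filter fun u => (x u).val ≠ 0 := by simp [ht]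

lemma nbjW_U : nbjW (nbjU x s t v) = nbjW x := by
  have h := hst x s t hs ht
  have h1 : 1 ≤ nbjW x := Finset.one_le_card.mpr ⟨s, smem x s t v hs ht hv⟩
  have hd : Disjoint ((Finset.univ.filter fun u => (x u).val ≠ 0).erase s) ({t} : Finset (Fin n)) := by
    simp
    intro _
    simp [ht]
  rw [nbjW, filt_w x s t v hs ht hv, Finset.card_union_of_disjoint hd,
    Finset.card_erase_of_mem (smem x s t v hs ht hv)]
  show nbjW x - 1 + 1 = nbjW x
  omega

lemma nbjE_xU : (nbjE x (nbjU x s t v) : ℤ) = (nbjW x : ℤ) - 1 := by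
  have h1 : 1 ≤ nbjW x := Finset.one_le_card.mpr ⟨s, smem x s t v hs ht hv⟩
  rw [nbjE, filt_ex x s t v hs ht hv, Finset.card_erase_of_mem (smem x s t v hs ht hv)]
  show ((nbjW x - 1 : ℕ) : ℤ) = _
  omega

lemma nbjC_xU : (nbjC x (nbjU x s t v) : ℤ) = (nbjW x : ℤ) - 1 := by
  have h1 : 1 ≤ nbjW x := Finset.one_le_card.mpr ⟨s, smem x s t v hs ht hv⟩
  rw [nbjC, filt_cx x s t v hs ht hv, Finset.card_erase_of_mem (smem x s t v hs ht hv)]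
  show ((nbjW x - 1 : ℕ) : ℤ) = _
  omega

lemma nbjE_Uy : (nbjE (nbjU x s t v) y : ℤ)
    = (nbjE x y : ℤ) - (if x s = y s then 1 else 0) + (if v = y t then 1 else 0) := by
  rw [nbjE, filt_ey x y s t v hs ht hv,
    card_surgery _ s t (hst x s t hs ht) (by simp [ht]) _]
  have hmem : (s ∈ Finset.univ.filter fun u => x u = y u ∧ (x u).val ≠ 0) ↔ x s = y s := by
    simp [hs]
  simp only [nbjE, hmem]

lemma nbjC_Uy : (nbjC (nbjU x s t v) y : ℤ)
    = (nbjC x y : ℤ) - (if (y s).val ≠ 0 then 1 else 0) + (if (y t).val ≠ 0 then 1 else 0) := by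
  rw [nbjC, filt_cy x y s t v hs ht hv,
    card_surgery _ s t (hst x s t hs ht) (by simp [ht]) _]
  have hmem : (s ∈ Finset.univ.filter fun u => (x u).val ≠ 0 ∧ (y u).val ≠ 0) ↔ (y s).val ≠ 0 := by
    simp [hs]
  simp only [nbjC, hmem]

end Cards

section Partition
variable {r n : ℕ} (x y : Fin n → Fin r)

/-- #\{x ≠ 0, y ≠ 0, x ≠ y\} -/
def cF : ℕ := (Finset.univ.filter fun u => ((x u).val ≠ 0 ∧ (y u).val ≠ 0) ∧ x u ≠ y u).card
/-- #\{x ≠ 0, y = 0\} -/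
def cG : ℕ := (Finset.univ.filter fun u => (x u).val ≠ 0 ∧ (y u).val = 0).card
/-- #\{x = 0, y ≠ 0\} -/
def cK1 : ℕ := (Finset.univ.filter fun u => (x u).val = 0 ∧ (y u).val ≠ 0).card
/-- #\{x = 0, y = 0\} -/
def cK0 : ℕ := (Finset.univ.filter fun u => (x u).val = 0 ∧ (y u).val = 0).card

lemma c_split : nbjE x y + cF x y = nbjC x y := by
  have h := Finset.card_filter_add_card_filter_not
    (s := Finset.univ.filter fun u => (x u).val ≠ 0 ∧ (y u).val ≠ 0)
    (p := fun u => x u = y u)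
  rw [Finset.filter_filter, Finset.filter_filter] at h
  have e1 : (Finset.univ.filter fun u => ((x u).val ≠ 0 ∧ (y u).val ≠ 0) ∧ x u = y u)
      = Finset.univ.filter fun u => x u = y u ∧ (x u).val ≠ 0 := by
    ext u
    simp only [Finset.mem_filter, Finset.mem_univ, true_and]
    constructor
    · rintro ⟨⟨h1, _⟩, h3⟩; exact ⟨h3, h1⟩
    · rintro ⟨h3, h1⟩; exact ⟨⟨h1, h3 ▸ h1⟩, h3⟩
  rw [e1] at h
  exact h

lemma k_split : nbjC x y + cG x y = nbjW x := by
  have h := Finset.card_filter_add_card_filter_not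
    (s := Finset.univ.filter fun u => (x u).val ≠ 0)
    (p := fun u => (y u).val ≠ 0)
  rw [Finset.filter_filter, Finset.filter_filter] at h
  have e1 : (Finset.univ.filter fun u => (x u).val ≠ 0 ∧ ¬ (y u).val ≠ 0)
      = Finset.univ.filter fun u => (x u).val ≠ 0 ∧ (y u).val = 0 := by
    ext u; simp only [Finset.mem_filter, Finset.mem_univ, true_and, not_not]
  rw [e1] at h
  exact h

lemma k_split' : nbjC x y + cK1 x y = nbjW y := by
  have h := Finset.card_filter_add_card_filter_not
    (s := Finset.univ.filter fun u => (y u).val ≠ 0)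
    (p := fun u => (x u).val ≠ 0)
  rw [Finset.filter_filter, Finset.filter_filter] at h
  have e1 : (Finset.univ.filter fun u => (y u).val ≠ 0 ∧ (x u).val ≠ 0)
      = Finset.univ.filter fun u => (x u).val ≠ 0 ∧ (y u).val ≠ 0 := by
    ext u; simp only [Finset.mem_filter, Finset.mem_univ, true_and, and_comm]
  have e2 : (Finset.univ.filter fun u => (y u).val ≠ 0 ∧ ¬ (x u).val ≠ 0)
      = Finset.univ.filter fun u => (x u).val = 0 ∧ (y u).val ≠ 0 := by
    ext u; simp only [Finset.mem_filter, Finset.mem_univ, true_and, not_not, and_comm]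
  rw [e1, e2] at h
  exact h

lemma n_split : nbjW x + (cK1 x y + cK0 x y) = n := by
  have h := Finset.card_filter_add_card_filter_not
    (s := (Finset.univ : Finset (Fin n)))
    (p := fun u => (x u).val ≠ 0)
  have h2 := Finset.card_filter_add_card_filter_not
    (s := Finset.univ.filter fun u => ¬ (x u).val ≠ 0)
    (p := fun u => (y u).val ≠ 0)
  rw [Finset.filter_filter, Finset.filter_filter] at h2
  have e1 : (Finset.univ.filter fun u => ¬ (x u).val ≠ 0 ∧ (y u).val ≠ 0)
      = Finset.univ.filter fun u => (x u).val = 0 ∧ (y u).val ≠ 0 := by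
    ext u; simp only [Finset.mem_filter, Finset.mem_univ, true_and, not_not]
  have e2 : (Finset.univ.filter fun u => ¬ (x u).val ≠ 0 ∧ ¬ (y u).val ≠ 0)
      = Finset.univ.filter fun u => (x u).val = 0 ∧ (y u).val = 0 := by
    ext u; simp only [Finset.mem_filter, Finset.mem_univ, true_and, not_not]
  rw [e1, e2] at h2
  rw [Finset.card_univ, Fintype.card_fin] at h
  rw [nbjW, cK1, cK0]
  omega

lemma card_v_ne (hr : 1 ≤ r) :
    (Finset.univ.filter fun v : Fin r => v.val ≠ 0).card = r - 1 := by
  have h := Finset.card_filter_add_card_filter_not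
    (s := (Finset.univ : Finset (Fin r))) (p := fun v : Fin r => v.val = 0)
  have e1 : (Finset.univ.filter fun v : Fin r => v.val = 0) = {(⟨0, hr⟩ : Fin r)} := by
    ext v; simp [Fin.ext_iff]
  rw [e1, Finset.card_univ, Fintype.card_fin, Finset.card_singleton] at h
  have e2 : (Finset.univ.filter fun v : Fin r => ¬ (v.val = 0))
      = Finset.univ.filter fun v : Fin r => v.val ≠ 0 := rfl
  rw [e2] at h
  omega

end Partition

section Sums
variable {r n : ℕ} (x y : Fin n → Fin r)

lemma sum_ind {α : Type*} [Fintype α] (p : α → Prop) [DecidablePred p] (c : ℝ) :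
    ∑ u : α, (if p u then c else 0) = ((Finset.univ.filter p).card : ℝ) * c := by
  rw [← Finset.sum_filter, Finset.sum_const, nsmul_eq_mul]

lemma s_split (g : ℤ → ℤ → ℝ) :
    ∑ s, (if (x s).val ≠ 0 then
        g (if x s = y s then 1 else 0) (if (y s).val ≠ 0 then 1 else 0) else 0)
      = (nbjE x y : ℝ) * g 1 1 + (cF x y : ℝ) * g 0 1 + (cG x y : ℝ) * g 0 0 := by
  have key : ∀ s, (if (x s).val ≠ 0 then
        g (if x s = y s then 1 else 0) (if (y s).val ≠ 0 then 1 else 0) else 0)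
      = (if x s = y s ∧ (x s).val ≠ 0 then g 1 1 else 0)
        + (if ((x s).val ≠ 0 ∧ (y s).val ≠ 0) ∧ x s ≠ y s then g 0 1 else 0)
        + (if (x s).val ≠ 0 ∧ (y s).val = 0 then g 0 0 else 0) := by
    intro s
    by_cases hxs : (x s).val ≠ 0
    · by_cases hxy : x s = y s
      · have hys : (y s).val ≠ 0 := hxy ▸ hxs
        simp [hxs, hxy, hys]
      · by_cases hys : (y s).val ≠ 0
        · simp [hxs, hxy, hys]
        · simp [hxs, hxy, hys, not_not.mp hys]
    · simp [hxs]
  rw [Finset.sum_congr rfl fun s _ => key s]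
  rw [Finset.sum_add_distrib, Finset.sum_add_distrib]
  have e1 := sum_ind (fun s : Fin n => x s = y s ∧ (x s).val ≠ 0) (g 1 1)
  have e2 := sum_ind (fun s : Fin n => ((x s).val ≠ 0 ∧ (y s).val ≠ 0) ∧ x s ≠ y s) (g 0 1)
  have e3 := sum_ind (fun s : Fin n => (x s).val ≠ 0 ∧ (y s).val = 0) (g 0 0)
  rw [e1, e2, e3]
  rfl

lemma t_split (g1 g0 : ℝ) :
    ∑ t, (if (x t).val = 0 then (if (y t).val ≠ 0 then g1 else g0) else 0)
      = (cK1 x y : ℝ) * g1 + (cK0 x y : ℝ) * g0 := by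
  have key : ∀ t, (if (x t).val = 0 then (if (y t).val ≠ 0 then g1 else g0) else 0)
      = (if (x t).val = 0 ∧ (y t).val ≠ 0 then g1 else 0)
        + (if (x t).val = 0 ∧ (y t).val = 0 then g0 else 0) := by
    intro t
    by_cases hxt : (x t).val = 0
    · by_cases hyt : (y t).val ≠ 0
      · simp [hxt, hyt]
      · simp [hxt, hyt, not_not.mp hyt]
    · simp [hxt]
  rw [Finset.sum_congr rfl fun t _ => key t]
  rw [Finset.sum_add_distrib]
  have e1 := sum_ind (fun t : Fin n => (x t).val = 0 ∧ (y t).val ≠ 0) g1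
  have e2 := sum_ind (fun t : Fin n => (x t).val = 0 ∧ (y t).val = 0) g0
  rw [e1, e2]
  rfl

lemma v_sum1 {r : ℕ} (hr : 3 ≤ r) (c0 : Fin r) (hc0 : c0.val ≠ 0) (P Q : Prop)
    [Decidable P] [Decidable Q] :
    ∑ v : Fin r, (if v.val ≠ 0 ∧ (if v = c0 then P else Q) then (1:ℝ) else 0)
      = (if P then 1 else 0) + ((r : ℝ) - 2) * (if Q then 1 else 0) := by
  rw [← Finset.add_sum_erase _ _ (Finset.mem_univ c0)]
  have h1 : (if c0.val ≠ 0 ∧ (if c0 = c0 then P else Q) then (1:ℝ) else 0)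
      = if P then 1 else 0 := by simp [hc0]
  have key2 : ∀ v ∈ Finset.univ.erase c0,
      (if v.val ≠ 0 ∧ (if v = c0 then P else Q) then (1:ℝ) else 0)
        = if v.val ≠ 0 ∧ Q then 1 else 0 := by
    intro v hv
    simp only [if_neg (Finset.ne_of_mem_erase hv)]
  rw [h1, Finset.sum_congr rfl key2]
  by_cases hQ : Q
  · simp only [hQ, and_true, if_true]
    rw [← Finset.sum_filter, Finset.sum_const, nsmul_eq_mul, mul_one, mul_one,
      Finset.filter_erase, Finset.card_erase_of_mem (by simp [hc0]),
      card_v_ne (r := r) (by omega)]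
    rw [show r - 1 - 1 = r - 2 by omega, Nat.cast_sub (by omega)]
    norm_num
  · simp [hQ]

lemma v_sum0 {r : ℕ} (hr : 3 ≤ r) (c0 : Fin r) (hc0 : c0.val = 0) (P Q : Prop)
    [Decidable P] [Decidable Q] :
    ∑ v : Fin r, (if v.val ≠ 0 ∧ (if v = c0 then P else Q) then (1:ℝ) else 0)
      = ((r : ℝ) - 1) * (if Q then 1 else 0) := by
  have key : ∀ v : Fin r, (if v.val ≠ 0 ∧ (if v = c0 then P else Q) then (1:ℝ) else 0)
      = if v.val ≠ 0 ∧ Q then 1 else 0 := by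
    intro v
    by_cases hvc : v = c0
    · simp [hvc, hc0]
    · simp [hvc]
  rw [Finset.sum_congr rfl fun v _ => key v]
  by_cases hQ : Q
  · simp only [hQ, and_true, if_true]
    rw [sum_ind, card_v_ne (r := r) (by omega), Nat.cast_sub (by omega)]
    norm_num
  · simp [hQ]

end Sums

section Bij
variable {r n k : ℕ}

lemma nbjU_inj (x : Fin n → Fin r) {s1 t1 : Fin n} {v1 : Fin r} {s2 t2 : Fin n} {v2 : Fin r}
    (hs1 : (x s1).val ≠ 0) (ht1 : (x t1).val = 0) (hv1 : v1.val ≠ 0)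
    (hs2 : (x s2).val ≠ 0) (ht2 : (x t2).val = 0) (hv2 : v2.val ≠ 0)
    (h : nbjU x s1 t1 v1 = nbjU x s2 t2 v2) : s1 = s2 ∧ t1 = t2 ∧ v1 = v2 := by
  have h12 := hst x s1 t1 hs1 ht1
  have h34 := hst x s2 t2 hs2 ht2
  have htt : t1 = t2 := by
    by_contra hne
    have hval := congrArg (fun g => (g t1).val) h
    simp only [nbjU_t] at hval
    by_cases hts : t1 = s2
    · rw [show nbjU x s2 t2 v2 t1 = x t2 by simp [nbjU, hts, h34]] at hval
      rw [hval] at hv1; exact hv1 ht2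
    · rw [nbjU_other x s2 t2 v2 t1 hts hne] at hval
      rw [hval] at hv1; exact hv1 ht1
  have hss : s1 = s2 := by
    by_contra hne
    have hval := congrArg (fun g => (g s1).val) h
    rw [show (nbjU x s1 t1 v1 s1).val = 0 from nbjU_s x s1 t1 v1 hs1 ht1] at hval
    have hs1t2 : s1 ≠ t2 := htt ▸ h12
    rw [nbjU_other x s2 t2 v2 s1 hne hs1t2] at hval
    exact hs1 hval.symm
  refine ⟨hss, htt, ?_⟩
  have hval := congrArg (fun g => g t1) h
  simp only [nbjU_t] at hval
  rw [show nbjU x s2 t2 v2 t1 = v2 by rw [htt]; exact nbjU_t x s2 t2 v2] at hval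
  exact hval

lemma exists_rep (x z : Fin n → Fin r) (hxk : nbjW x = k) (hzk : nbjW z = k)
    (he : (nbjE x z : ℤ) = (k : ℤ) - 1) (hc : (nbjC x z : ℤ) = (k : ℤ) - 1) :
    ∃ s t v, (x s).val ≠ 0 ∧ (x t).val = 0 ∧ v.val ≠ 0 ∧ z = nbjU x s t v := by
  have hk1 : 1 ≤ k := by omega
  have heN : nbjE x z = k - 1 := by omega
  have hcN : nbjC x z = k - 1 := by omega
  set Fe := Finset.univ.filter fun u => x u = z u ∧ (x u).val ≠ 0 with hFe
  set Fc := Finset.univ.filter fun u => (x u).val ≠ 0 ∧ (z u).val ≠ 0 with hFc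
  set Sx := Finset.univ.filter fun u => (x u).val ≠ 0 with hSx
  set Sz := Finset.univ.filter fun u => (z u).val ≠ 0 with hSz
  have hsub : Fe ⊆ Fc := by
    intro u hu
    simp only [hFe, hFc, Finset.mem_filter, Finset.mem_univ, true_and] at hu ⊢
    exact ⟨hu.2, hu.1 ▸ hu.2⟩
  have hFeFc : Fe = Fc := Finset.eq_of_subset_of_card_le hsub (by
    show Fc.card ≤ Fe.card
    have : Fc.card = nbjC x z := rfl
    have h2 : Fe.card = nbjE x z := rfl
    omega)
  have hFcSx : Fc ⊆ Sx := fun u hu => by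
    simp only [hFc, hSx, Finset.mem_filter, Finset.mem_univ, true_and] at hu ⊢
    exact hu.1
  have hFcSz : Fc ⊆ Sz := fun u hu => by
    simp only [hFc, hSz, Finset.mem_filter, Finset.mem_univ, true_and] at hu ⊢
    exact hu.2
  have hcards : (Sx \ Fc).card = 1 := by
    rw [Finset.card_sdiff_of_subset hFcSx]
    have h1 : Sx.card = nbjW x := rfl
    have h2 : Fc.card = nbjC x z := rfl
    omega
  have hcardt : (Sz \ Fc).card = 1 := by
    rw [Finset.card_sdiff_of_subset hFcSz]
    have h1 : Sz.card = nbjW z := rfl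
    have h2 : Fc.card = nbjC x z := rfl
    omega
  obtain ⟨s, hsv⟩ := Finset.card_eq_one.mp hcards
  obtain ⟨t, htv⟩ := Finset.card_eq_one.mp hcardt
  have hsmem : s ∈ Sx \ Fc := hsv ▸ Finset.mem_singleton_self s
  have htmem : t ∈ Sz \ Fc := htv ▸ Finset.mem_singleton_self t
  rw [Finset.mem_sdiff] at hsmem htmem
  have hxs : (x s).val ≠ 0 := by
    have := hsmem.1; simp only [hSx, Finset.mem_filter] at this; exact this.2
  have hzs : (z s).val = 0 := by
    have h1 := hsmem.2
    simp only [hFc, Finset.mem_filter, Finset.mem_univ, true_and] at h1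
    by_contra h2
    exact h1 ⟨hxs, h2⟩
  have hzt : (z t).val ≠ 0 := by
    have := htmem.1; simp only [hSz, Finset.mem_filter] at this; exact this.2
  have hxt : (x t).val = 0 := by
    have h1 := htmem.2
    simp only [hFc, Finset.mem_filter, Finset.mem_univ, true_and] at h1
    by_contra h2
    exact h1 ⟨h2, hzt⟩
  refine ⟨s, t, z t, hxs, hxt, hzt, ?_⟩
  have h12 := hst x s t hxs hxt
  funext u
  by_cases hut : u = t
  · subst hut; rw [nbjU_t]
  · by_cases hus : u = s
    · subst hus
      rw [show nbjU x u t (z t) u = x t by simp [nbjU, hut]]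
      exact Fin.val_injective (by rw [hzs, hxt])
    · rw [nbjU_other x s t (z t) u hus hut]
      by_cases hxu : (x u).val ≠ 0
      · by_cases hFcu : u ∈ Fc
        · rw [← hFeFc] at hFcu
          simp only [hFe, Finset.mem_filter, Finset.mem_univ, true_and] at hFcu
          exact hFcu.1.symm
        · exfalso
          have : u ∈ Sx \ Fc := Finset.mem_sdiff.mpr
            ⟨by simp [hSx, hxu], hFcu⟩
          rw [hsv, Finset.mem_singleton] at this
          exact hus this
      · by_cases hzu : (z u).val ≠ 0
        · exfalso
          have hFcu : u ∉ Fc := by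
            simp only [hFc, Finset.mem_filter, Finset.mem_univ, true_and]
            intro hh; exact hxu hh.1
          have : u ∈ Sz \ Fc := Finset.mem_sdiff.mpr ⟨by simp [hSz, hzu], hFcu⟩
          rw [htv, Finset.mem_singleton] at this
          exact hut this
        · exact Fin.val_injective (by
            rw [not_not.mp hzu, not_not.mp hxu])

end Bij

section Count
variable {r n k : ℕ}

lemma reindex (hr : 3 ≤ r) (x : nbjX r n k) (f : (Fin n → Fin r) → ℝ) :
    ∑ z : nbjX r n k, (if (nbjE x.1 z.1 : ℤ) = (k:ℤ) - 0 - 1 ∧ (nbjC x.1 z.1 : ℤ) = (k:ℤ) - 1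
        then f z.1 else 0)
      = ∑ p ∈ Finset.univ.filter (fun p : Fin n × Fin n × Fin r =>
            (x.1 p.1).val ≠ 0 ∧ (x.1 p.2.1).val = 0 ∧ (p.2.2).val ≠ 0),
          f (nbjU x.1 p.1 p.2.1 p.2.2) := by
  rw [← Finset.sum_filter]
  have hmem : ∀ p : Fin n × Fin n × Fin r,
      p ∈ Finset.univ.filter (fun p : Fin n × Fin n × Fin r =>
        (x.1 p.1).val ≠ 0 ∧ (x.1 p.2.1).val = 0 ∧ (p.2.2).val ≠ 0) →
      (x.1 p.1).val ≠ 0 ∧ (x.1 p.2.1).val = 0 ∧ (p.2.2).val ≠ 0 := fun p hp => by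
    simpa using hp
  refine (Finset.sum_bij
    (fun p hp => (⟨nbjU x.1 p.1 p.2.1 p.2.2,
      (nbjW_U x.1 p.1 p.2.1 p.2.2 (hmem p hp).1 (hmem p hp).2.1 (hmem p hp).2.2).trans x.2⟩
        : nbjX r n k))
    ?_ ?_ ?_ ?_).symm
  · intro p hp
    obtain ⟨h1, h2, h3⟩ := hmem p hp
    simp only [Finset.mem_filter, Finset.mem_univ, true_and]
    constructor
    · rw [nbjE_xU x.1 p.1 p.2.1 p.2.2 h1 h2 h3, x.2]
      ring
    · rw [nbjC_xU x.1 p.1 p.2.1 p.2.2 h1 h2 h3, x.2]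
  · intro p hp q hq heq
    obtain ⟨h1, h2, h3⟩ := hmem p hp
    obtain ⟨h4, h5, h6⟩ := hmem q hq
    have hval : nbjU x.1 p.1 p.2.1 p.2.2 = nbjU x.1 q.1 q.2.1 q.2.2 := congrArg Subtype.val heq
    obtain ⟨ha, hb, hc⟩ := nbjU_inj x.1 h1 h2 h3 h4 h5 h6 hval
    exact Prod.ext ha (Prod.ext hb hc)
  · intro z hz
    simp only [Finset.mem_filter, Finset.mem_univ, true_and] at hz
    have he : (nbjE x.1 z.1 : ℤ) = (k : ℤ) - 1 := by rw [hz.1]; ring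
    obtain ⟨s, t, v, h1, h2, h3, h4⟩ := exists_rep x.1 z.1 x.2 z.2 he hz.2
    exact ⟨(s, t, v), by simp [h1, h2, h3], Subtype.ext h4.symm⟩
  · intro p hp
    rfl

/-- the inner-sum value as a function of the class data of `s` -/
def gfun (E C e c : ℤ) (K1 K0 rr : ℝ) (a b : ℤ) : ℝ :=
  K1 * ((if e - a + 1 = E ∧ c - b + 1 = C then (1:ℝ) else 0)
      + (rr - 2) * (if e - a = E ∧ c - b + 1 = C then (1:ℝ) else 0))
  + K0 * ((rr - 1) * (if e - a = E ∧ c - b = C then (1:ℝ) else 0))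

lemma count_main (hr : 3 ≤ r) (x y : nbjX r n k) (E C : ℤ) :
    ∑ z : nbjX r n k,
      (if (nbjE x.1 z.1 : ℤ) = (k:ℤ) - 0 - 1 ∧ (nbjC x.1 z.1 : ℤ) = (k:ℤ) - 1 then (1:ℝ) else 0)
        * (if (nbjE z.1 y.1 : ℤ) = E ∧ (nbjC z.1 y.1 : ℤ) = C then (1:ℝ) else 0)
      = (nbjE x.1 y.1 : ℝ) * gfun E C (nbjE x.1 y.1) (nbjC x.1 y.1) (cK1 x.1 y.1) (cK0 x.1 y.1) r 1 1
        + (cF x.1 y.1 : ℝ) * gfun E C (nbjE x.1 y.1) (nbjC x.1 y.1) (cK1 x.1 y.1) (cK0 x.1 y.1) r 0 1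
        + (cG x.1 y.1 : ℝ) * gfun E C (nbjE x.1 y.1) (nbjC x.1 y.1) (cK1 x.1 y.1) (cK0 x.1 y.1) r 0 0 := by
  simp only [ite_mul, one_mul, zero_mul]
  rw [reindex hr x (fun w => if (nbjE w y.1 : ℤ) = E ∧ (nbjC w y.1 : ℤ) = C then (1:ℝ) else 0)]
  rw [Finset.sum_filter]
  rw [Fintype.sum_prod_type]
  simp only [Fintype.sum_prod_type]
  have key : ∀ s : Fin n,
      (∑ t : Fin n, ∑ v : Fin r,
        if (x.1 s).val ≠ 0 ∧ (x.1 t).val = 0 ∧ v.val ≠ 0 then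
          (if (nbjE (nbjU x.1 s t v) y.1 : ℤ) = E ∧ (nbjC (nbjU x.1 s t v) y.1 : ℤ) = C
            then (1:ℝ) else 0) else 0)
      = if (x.1 s).val ≠ 0 then
          gfun E C (nbjE x.1 y.1) (nbjC x.1 y.1) (cK1 x.1 y.1) (cK0 x.1 y.1) r
            (if x.1 s = y.1 s then 1 else 0) (if (y.1 s).val ≠ 0 then 1 else 0)
        else 0 := by
    intro s
    by_cases hs : (x.1 s).val ≠ 0
    · rw [if_pos hs]
      have keyt : ∀ t : Fin n,
          (∑ v : Fin r,
            if (x.1 s).val ≠ 0 ∧ (x.1 t).val = 0 ∧ v.val ≠ 0 then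
              (if (nbjE (nbjU x.1 s t v) y.1 : ℤ) = E ∧ (nbjC (nbjU x.1 s t v) y.1 : ℤ) = C
                then (1:ℝ) else 0) else 0)
          = if (x.1 t).val = 0 then
              (if (y.1 t).val ≠ 0 then
                ((if (nbjE x.1 y.1 : ℤ) - (if x.1 s = y.1 s then 1 else 0) + 1 = E
                    ∧ (nbjC x.1 y.1 : ℤ) - (if (y.1 s).val ≠ 0 then 1 else 0) + 1 = C
                  then (1:ℝ) else 0)
                  + ((r:ℝ) - 2) * (if (nbjE x.1 y.1 : ℤ) - (if x.1 s = y.1 s then 1 else 0) = E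
                    ∧ (nbjC x.1 y.1 : ℤ) - (if (y.1 s).val ≠ 0 then 1 else 0) + 1 = C
                  then (1:ℝ) else 0))
              else
                ((r:ℝ) - 1) * (if (nbjE x.1 y.1 : ℤ) - (if x.1 s = y.1 s then 1 else 0) = E
                    ∧ (nbjC x.1 y.1 : ℤ) - (if (y.1 s).val ≠ 0 then 1 else 0) = C
                  then (1:ℝ) else 0))
            else 0 := by
        intro t
        by_cases ht : (x.1 t).val = 0
        · rw [if_pos ht]
          by_cases hyt : (y.1 t).val ≠ 0
          · rw [if_pos hyt]
            have keyv : ∀ v : Fin r,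
                (if (x.1 s).val ≠ 0 ∧ (x.1 t).val = 0 ∧ v.val ≠ 0 then
                  (if (nbjE (nbjU x.1 s t v) y.1 : ℤ) = E ∧ (nbjC (nbjU x.1 s t v) y.1 : ℤ) = C
                    then (1:ℝ) else 0) else 0)
                = if v.val ≠ 0 ∧ (if v = y.1 t then
                      ((nbjE x.1 y.1 : ℤ) - (if x.1 s = y.1 s then 1 else 0) + 1 = E
                        ∧ (nbjC x.1 y.1 : ℤ) - (if (y.1 s).val ≠ 0 then 1 else 0) + 1 = C)
                    else
                      ((nbjE x.1 y.1 : ℤ) - (if x.1 s = y.1 s then 1 else 0) = E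
                        ∧ (nbjC x.1 y.1 : ℤ) - (if (y.1 s).val ≠ 0 then 1 else 0) + 1 = C))
                  then (1:ℝ) else 0 := by
              intro v
              by_cases hv : v.val ≠ 0
              · rw [if_pos ⟨hs, ht, hv⟩]
                rw [nbjE_Uy x.1 y.1 s t v hs ht hv, nbjC_Uy x.1 y.1 s t v hs ht hv]
                by_cases hvy : v = y.1 t
                · simp only [if_pos hvy, if_pos hyt]
                  exact (if_congr (and_iff_right hv) rfl rfl).symm
                · simp only [if_neg hvy, if_pos hyt, add_zero]
                  exact (if_congr (and_iff_right hv) rfl rfl).symm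
              · simp [hv]
            rw [Finset.sum_congr rfl fun v _ => keyv v]
            exact v_sum1 hr (y.1 t) hyt _ _
          · rw [if_neg hyt]
            have hyt0 : (y.1 t).val = 0 := not_not.mp hyt
            have keyv : ∀ v : Fin r,
                (if (x.1 s).val ≠ 0 ∧ (x.1 t).val = 0 ∧ v.val ≠ 0 then
                  (if (nbjE (nbjU x.1 s t v) y.1 : ℤ) = E ∧ (nbjC (nbjU x.1 s t v) y.1 : ℤ) = C
                    then (1:ℝ) else 0) else 0)
                = if v.val ≠ 0 ∧ (if v = y.1 t then
                      ((nbjE x.1 y.1 : ℤ) - (if x.1 s = y.1 s then 1 else 0) + 1 = E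
                        ∧ (nbjC x.1 y.1 : ℤ) - (if (y.1 s).val ≠ 0 then 1 else 0) = C)
                    else
                      ((nbjE x.1 y.1 : ℤ) - (if x.1 s = y.1 s then 1 else 0) = E
                        ∧ (nbjC x.1 y.1 : ℤ) - (if (y.1 s).val ≠ 0 then 1 else 0) = C))
                  then (1:ℝ) else 0 := by
              intro v
              by_cases hv : v.val ≠ 0
              · rw [if_pos ⟨hs, ht, hv⟩]
                rw [nbjE_Uy x.1 y.1 s t v hs ht hv, nbjC_Uy x.1 y.1 s t v hs ht hv]
                by_cases hvy : v = y.1 t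
                · exact absurd (hvy ▸ hv) (not_not.mpr hyt0)
                · simp only [if_neg hvy, if_neg hyt, add_zero]
                  exact (if_congr (and_iff_right hv) rfl rfl).symm
              · simp [hv]
            rw [Finset.sum_congr rfl fun v _ => keyv v]
            exact v_sum0 hr (y.1 t) hyt0 _ _
        · rw [if_neg ht]
          apply Finset.sum_eq_zero
          intro v _
          rw [if_neg (by tauto)]
      rw [Finset.sum_congr rfl fun t _ => keyt t]
      exact t_split x.1 y.1 _ _
    · rw [if_neg hs]
      apply Finset.sum_eq_zero
      intro t _
      apply Finset.sum_eq_zero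
      intro v _
      rw [if_neg (by tauto)]
  rw [Finset.sum_congr rfl fun s _ => key s]
  exact s_split x.1 y.1 _

end Count

lemma final_arith (rr nn kk ii jj e c ff gg k1 k0 : ℤ)
    (h1 : e + ff = c) (h2 : c + gg = kk) (h3 : c + k1 = kk) (h4 : kk + (k1 + k0) = nn) :
    (e:ℝ) * ((k1:ℝ) * ((if e - 1 + 1 = kk - ii - jj ∧ c - 1 + 1 = kk - jj then (1:ℝ) else 0)
        + ((rr:ℝ) - 2) * (if e - 1 = kk - ii - jj ∧ c - 1 + 1 = kk - jj then (1:ℝ) else 0))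
      + (k0:ℝ) * (((rr:ℝ) - 1) * (if e - 1 = kk - ii - jj ∧ c - 1 = kk - jj then (1:ℝ) else 0)))
    + (ff:ℝ) * ((k1:ℝ) * ((if e - 0 + 1 = kk - ii - jj ∧ c - 1 + 1 = kk - jj then (1:ℝ) else 0)
        + ((rr:ℝ) - 2) * (if e - 0 = kk - ii - jj ∧ c - 1 + 1 = kk - jj then (1:ℝ) else 0))
      + (k0:ℝ) * (((rr:ℝ) - 1) * (if e - 0 = kk - ii - jj ∧ c - 1 = kk - jj then (1:ℝ) else 0)))
    + (gg:ℝ) * ((k1:ℝ) * ((if e - 0 + 1 = kk - ii - jj ∧ c - 0 + 1 = kk - jj then (1:ℝ) else 0)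
        + ((rr:ℝ) - 2) * (if e - 0 = kk - ii - jj ∧ c - 0 + 1 = kk - jj then (1:ℝ) else 0))
      + (k0:ℝ) * (((rr:ℝ) - 1) * (if e - 0 = kk - ii - jj ∧ c - 0 = kk - jj then (1:ℝ) else 0)))
    = ((kk:ℝ) - (ii:ℝ) - (jj:ℝ) + 1) * ((rr:ℝ) - 2) * (jj:ℝ) * (if e = kk - (ii - 1) - jj ∧ c = kk - jj then (1:ℝ) else 0)
    + ((kk:ℝ) - (ii:ℝ) - (jj:ℝ) + 1) * ((nn:ℝ) - (kk:ℝ) - (jj:ℝ) + 1) * ((rr:ℝ) - 1) * (if e = kk - ii - (jj - 1) ∧ c = kk - (jj - 1) then (1:ℝ) else 0)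
    + ((ii:ℝ) + 1) * (jj:ℝ) * (if e = kk - (ii + 1) - jj ∧ c = kk - jj then (1:ℝ) else 0)
    + ((jj:ℝ) + 1) ^ 2 * (if e = kk - ii - (jj + 1) ∧ c = kk - (jj + 1) then (1:ℝ) else 0)
    + ((ii:ℝ) + 1) * ((nn:ℝ) - (kk:ℝ) - (jj:ℝ) + 1) * ((rr:ℝ) - 1) * (if e = kk - (ii + 1) - (jj - 1) ∧ c = kk - (jj - 1) then (1:ℝ) else 0)
    + ((jj:ℝ) + 1) ^ 2 * ((rr:ℝ) - 2) * (if e = kk - (ii - 1) - (jj + 1) ∧ c = kk - (jj + 1) then (1:ℝ) else 0)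
    + (jj:ℝ) * (((kk:ℝ) - (ii:ℝ) - (jj:ℝ)) + ((rr:ℝ) - 2) * (ii:ℝ) + ((nn:ℝ) - (kk:ℝ) - (jj:ℝ)) * ((rr:ℝ) - 1)) * (if e = kk - ii - jj ∧ c = kk - jj then (1:ℝ) else 0) := by
  have hrf : (ff:ℝ) = (c:ℝ) - (e:ℝ) := by exact_mod_cast (by omega : ff = c - e)
  have hrg : (gg:ℝ) = (kk:ℝ) - (c:ℝ) := by exact_mod_cast (by omega : gg = kk - c)
  have hrk1 : (k1:ℝ) = (kk:ℝ) - (c:ℝ) := by exact_mod_cast (by omega : k1 = kk - c)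
  have hrk0 : (k0:ℝ) = (nn:ℝ) - (kk:ℝ) - ((kk:ℝ) - (c:ℝ)) := by
    exact_mod_cast (by omega : k0 = nn - kk - (kk - c))
  by_cases hp1 : (e = kk - (ii - 1) - jj ∧ c = kk - jj)
  · obtain ⟨he, hc⟩ := hp1
    rw [if_neg (show ¬(e - 1 + 1 = kk - ii - jj ∧ c - 1 + 1 = kk - jj) by omega),
      if_pos (show (e - 1 = kk - ii - jj ∧ c - 1 + 1 = kk - jj) by omega),
      if_neg (show ¬(e - 1 = kk - ii - jj ∧ c - 1 = kk - jj) by omega),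
      if_neg (show ¬(e - 0 + 1 = kk - ii - jj ∧ c - 1 + 1 = kk - jj) by omega),
      if_neg (show ¬(e - 0 = kk - ii - jj ∧ c - 1 + 1 = kk - jj) by omega),
      if_neg (show ¬(e - 0 = kk - ii - jj ∧ c - 1 = kk - jj) by omega),
      if_neg (show ¬(e - 0 + 1 = kk - ii - jj ∧ c - 0 + 1 = kk - jj) by omega),
      if_neg (show ¬(e - 0 = kk - ii - jj ∧ c - 0 + 1 = kk - jj) by omega),
      if_neg (show ¬(e - 0 = kk - ii - jj ∧ c - 0 = kk - jj) by omega),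
      if_pos (show (e = kk - (ii - 1) - jj ∧ c = kk - jj) by omega),
      if_neg (show ¬(e = kk - ii - (jj - 1) ∧ c = kk - (jj - 1)) by omega),
      if_neg (show ¬(e = kk - (ii + 1) - jj ∧ c = kk - jj) by omega),
      if_neg (show ¬(e = kk - ii - (jj + 1) ∧ c = kk - (jj + 1)) by omega),
      if_neg (show ¬(e = kk - (ii + 1) - (jj - 1) ∧ c = kk - (jj - 1)) by omega),
      if_neg (show ¬(e = kk - (ii - 1) - (jj + 1) ∧ c = kk - (jj + 1)) by omega),
      if_neg (show ¬(e = kk - ii - jj ∧ c = kk - jj) by omega)]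
    have hre : (e:ℝ) = (kk:ℝ) - ((ii:ℝ) - 1) - (jj:ℝ) := by exact_mod_cast he
    have hrc : (c:ℝ) = (kk:ℝ) - (jj:ℝ) := by exact_mod_cast hc
    rw [hrf, hrg, hrk1, hrk0, hre, hrc]; ring
  by_cases hp2 : (e = kk - ii - (jj - 1) ∧ c = kk - (jj - 1))
  · obtain ⟨he, hc⟩ := hp2
    rw [if_neg (show ¬(e - 1 + 1 = kk - ii - jj ∧ c - 1 + 1 = kk - jj) by omega),
      if_neg (show ¬(e - 1 = kk - ii - jj ∧ c - 1 + 1 = kk - jj) by omega),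
      if_pos (show (e - 1 = kk - ii - jj ∧ c - 1 = kk - jj) by omega),
      if_neg (show ¬(e - 0 + 1 = kk - ii - jj ∧ c - 1 + 1 = kk - jj) by omega),
      if_neg (show ¬(e - 0 = kk - ii - jj ∧ c - 1 + 1 = kk - jj) by omega),
      if_neg (show ¬(e - 0 = kk - ii - jj ∧ c - 1 = kk - jj) by omega),
      if_neg (show ¬(e - 0 + 1 = kk - ii - jj ∧ c - 0 + 1 = kk - jj) by omega),
      if_neg (show ¬(e - 0 = kk - ii - jj ∧ c - 0 + 1 = kk - jj) by omega),
      if_neg (show ¬(e - 0 = kk - ii - jj ∧ c - 0 = kk - jj) by omega),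
      if_neg (show ¬(e = kk - (ii - 1) - jj ∧ c = kk - jj) by omega),
      if_pos (show (e = kk - ii - (jj - 1) ∧ c = kk - (jj - 1)) by omega),
      if_neg (show ¬(e = kk - (ii + 1) - jj ∧ c = kk - jj) by omega),
      if_neg (show ¬(e = kk - ii - (jj + 1) ∧ c = kk - (jj + 1)) by omega),
      if_neg (show ¬(e = kk - (ii + 1) - (jj - 1) ∧ c = kk - (jj - 1)) by omega),
      if_neg (show ¬(e = kk - (ii - 1) - (jj + 1) ∧ c = kk - (jj + 1)) by omega),
      if_neg (show ¬(e = kk - ii - jj ∧ c = kk - jj) by omega)]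
    have hre : (e:ℝ) = (kk:ℝ) - (ii:ℝ) - ((jj:ℝ) - 1) := by exact_mod_cast he
    have hrc : (c:ℝ) = (kk:ℝ) - ((jj:ℝ) - 1) := by exact_mod_cast hc
    rw [hrf, hrg, hrk1, hrk0, hre, hrc]; ring
  by_cases hp3 : (e = kk - (ii + 1) - jj ∧ c = kk - jj)
  · obtain ⟨he, hc⟩ := hp3
    rw [if_neg (show ¬(e - 1 + 1 = kk - ii - jj ∧ c - 1 + 1 = kk - jj) by omega),
      if_neg (show ¬(e - 1 = kk - ii - jj ∧ c - 1 + 1 = kk - jj) by omega),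
      if_neg (show ¬(e - 1 = kk - ii - jj ∧ c - 1 = kk - jj) by omega),
      if_pos (show (e - 0 + 1 = kk - ii - jj ∧ c - 1 + 1 = kk - jj) by omega),
      if_neg (show ¬(e - 0 = kk - ii - jj ∧ c - 1 + 1 = kk - jj) by omega),
      if_neg (show ¬(e - 0 = kk - ii - jj ∧ c - 1 = kk - jj) by omega),
      if_neg (show ¬(e - 0 + 1 = kk - ii - jj ∧ c - 0 + 1 = kk - jj) by omega),
      if_neg (show ¬(e - 0 = kk - ii - jj ∧ c - 0 + 1 = kk - jj) by omega),
      if_neg (show ¬(e - 0 = kk - ii - jj ∧ c - 0 = kk - jj) by omega),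
      if_neg (show ¬(e = kk - (ii - 1) - jj ∧ c = kk - jj) by omega),
      if_neg (show ¬(e = kk - ii - (jj - 1) ∧ c = kk - (jj - 1)) by omega),
      if_pos (show (e = kk - (ii + 1) - jj ∧ c = kk - jj) by omega),
      if_neg (show ¬(e = kk - ii - (jj + 1) ∧ c = kk - (jj + 1)) by omega),
      if_neg (show ¬(e = kk - (ii + 1) - (jj - 1) ∧ c = kk - (jj - 1)) by omega),
      if_neg (show ¬(e = kk - (ii - 1) - (jj + 1) ∧ c = kk - (jj + 1)) by omega),
      if_neg (show ¬(e = kk - ii - jj ∧ c = kk - jj) by omega)]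
    have hre : (e:ℝ) = (kk:ℝ) - ((ii:ℝ) + 1) - (jj:ℝ) := by exact_mod_cast he
    have hrc : (c:ℝ) = (kk:ℝ) - (jj:ℝ) := by exact_mod_cast hc
    rw [hrf, hrg, hrk1, hrk0, hre, hrc]; ring
  by_cases hp4 : (e = kk - ii - (jj + 1) ∧ c = kk - (jj + 1))
  · obtain ⟨he, hc⟩ := hp4
    rw [if_neg (show ¬(e - 1 + 1 = kk - ii - jj ∧ c - 1 + 1 = kk - jj) by omega),
      if_neg (show ¬(e - 1 = kk - ii - jj ∧ c - 1 + 1 = kk - jj) by omega),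
      if_neg (show ¬(e - 1 = kk - ii - jj ∧ c - 1 = kk - jj) by omega),
      if_neg (show ¬(e - 0 + 1 = kk - ii - jj ∧ c - 1 + 1 = kk - jj) by omega),
      if_neg (show ¬(e - 0 = kk - ii - jj ∧ c - 1 + 1 = kk - jj) by omega),
      if_neg (show ¬(e - 0 = kk - ii - jj ∧ c - 1 = kk - jj) by omega),
      if_pos (show (e - 0 + 1 = kk - ii - jj ∧ c - 0 + 1 = kk - jj) by omega),
      if_neg (show ¬(e - 0 = kk - ii - jj ∧ c - 0 + 1 = kk - jj) by omega),
      if_neg (show ¬(e - 0 = kk - ii - jj ∧ c - 0 = kk - jj) by omega),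
      if_neg (show ¬(e = kk - (ii - 1) - jj ∧ c = kk - jj) by omega),
      if_neg (show ¬(e = kk - ii - (jj - 1) ∧ c = kk - (jj - 1)) by omega),
      if_neg (show ¬(e = kk - (ii + 1) - jj ∧ c = kk - jj) by omega),
      if_pos (show (e = kk - ii - (jj + 1) ∧ c = kk - (jj + 1)) by omega),
      if_neg (show ¬(e = kk - (ii + 1) - (jj - 1) ∧ c = kk - (jj - 1)) by omega),
      if_neg (show ¬(e = kk - (ii - 1) - (jj + 1) ∧ c = kk - (jj + 1)) by omega),
      if_neg (show ¬(e = kk - ii - jj ∧ c = kk - jj) by omega)]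
    have hre : (e:ℝ) = (kk:ℝ) - (ii:ℝ) - ((jj:ℝ) + 1) := by exact_mod_cast he
    have hrc : (c:ℝ) = (kk:ℝ) - ((jj:ℝ) + 1) := by exact_mod_cast hc
    rw [hrf, hrg, hrk1, hrk0, hre, hrc]; ring
  by_cases hp5 : (e = kk - (ii + 1) - (jj - 1) ∧ c = kk - (jj - 1))
  · obtain ⟨he, hc⟩ := hp5
    rw [if_neg (show ¬(e - 1 + 1 = kk - ii - jj ∧ c - 1 + 1 = kk - jj) by omega),
      if_neg (show ¬(e - 1 = kk - ii - jj ∧ c - 1 + 1 = kk - jj) by omega),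
      if_neg (show ¬(e - 1 = kk - ii - jj ∧ c - 1 = kk - jj) by omega),
      if_neg (show ¬(e - 0 + 1 = kk - ii - jj ∧ c - 1 + 1 = kk - jj) by omega),
      if_neg (show ¬(e - 0 = kk - ii - jj ∧ c - 1 + 1 = kk - jj) by omega),
      if_pos (show (e - 0 = kk - ii - jj ∧ c - 1 = kk - jj) by omega),
      if_neg (show ¬(e - 0 + 1 = kk - ii - jj ∧ c - 0 + 1 = kk - jj) by omega),
      if_neg (show ¬(e - 0 = kk - ii - jj ∧ c - 0 + 1 = kk - jj) by omega),
      if_neg (show ¬(e - 0 = kk - ii - jj ∧ c - 0 = kk - jj) by omega),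
      if_neg (show ¬(e = kk - (ii - 1) - jj ∧ c = kk - jj) by omega),
      if_neg (show ¬(e = kk - ii - (jj - 1) ∧ c = kk - (jj - 1)) by omega),
      if_neg (show ¬(e = kk - (ii + 1) - jj ∧ c = kk - jj) by omega),
      if_neg (show ¬(e = kk - ii - (jj + 1) ∧ c = kk - (jj + 1)) by omega),
      if_pos (show (e = kk - (ii + 1) - (jj - 1) ∧ c = kk - (jj - 1)) by omega),
      if_neg (show ¬(e = kk - (ii - 1) - (jj + 1) ∧ c = kk - (jj + 1)) by omega),
      if_neg (show ¬(e = kk - ii - jj ∧ c = kk - jj) by omega)]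
    have hre : (e:ℝ) = (kk:ℝ) - ((ii:ℝ) + 1) - ((jj:ℝ) - 1) := by exact_mod_cast he
    have hrc : (c:ℝ) = (kk:ℝ) - ((jj:ℝ) - 1) := by exact_mod_cast hc
    rw [hrf, hrg, hrk1, hrk0, hre, hrc]; ring
  by_cases hp6 : (e = kk - (ii - 1) - (jj + 1) ∧ c = kk - (jj + 1))
  · obtain ⟨he, hc⟩ := hp6
    rw [if_neg (show ¬(e - 1 + 1 = kk - ii - jj ∧ c - 1 + 1 = kk - jj) by omega),
      if_neg (show ¬(e - 1 = kk - ii - jj ∧ c - 1 + 1 = kk - jj) by omega),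
      if_neg (show ¬(e - 1 = kk - ii - jj ∧ c - 1 = kk - jj) by omega),
      if_neg (show ¬(e - 0 + 1 = kk - ii - jj ∧ c - 1 + 1 = kk - jj) by omega),
      if_neg (show ¬(e - 0 = kk - ii - jj ∧ c - 1 + 1 = kk - jj) by omega),
      if_neg (show ¬(e - 0 = kk - ii - jj ∧ c - 1 = kk - jj) by omega),
      if_neg (show ¬(e - 0 + 1 = kk - ii - jj ∧ c - 0 + 1 = kk - jj) by omega),
      if_pos (show (e - 0 = kk - ii - jj ∧ c - 0 + 1 = kk - jj) by omega),
      if_neg (show ¬(e - 0 = kk - ii - jj ∧ c - 0 = kk - jj) by omega),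
      if_neg (show ¬(e = kk - (ii - 1) - jj ∧ c = kk - jj) by omega),
      if_neg (show ¬(e = kk - ii - (jj - 1) ∧ c = kk - (jj - 1)) by omega),
      if_neg (show ¬(e = kk - (ii + 1) - jj ∧ c = kk - jj) by omega),
      if_neg (show ¬(e = kk - ii - (jj + 1) ∧ c = kk - (jj + 1)) by omega),
      if_neg (show ¬(e = kk - (ii + 1) - (jj - 1) ∧ c = kk - (jj - 1)) by omega),
      if_pos (show (e = kk - (ii - 1) - (jj + 1) ∧ c = kk - (jj + 1)) by omega),
      if_neg (show ¬(e = kk - ii - jj ∧ c = kk - jj) by omega)]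
    have hre : (e:ℝ) = (kk:ℝ) - ((ii:ℝ) - 1) - ((jj:ℝ) + 1) := by exact_mod_cast he
    have hrc : (c:ℝ) = (kk:ℝ) - ((jj:ℝ) + 1) := by exact_mod_cast hc
    rw [hrf, hrg, hrk1, hrk0, hre, hrc]; ring
  by_cases hp7 : (e = kk - ii - jj ∧ c = kk - jj)
  · obtain ⟨he, hc⟩ := hp7
    rw [if_pos (show (e - 1 + 1 = kk - ii - jj ∧ c - 1 + 1 = kk - jj) by omega),
      if_neg (show ¬(e - 1 = kk - ii - jj ∧ c - 1 + 1 = kk - jj) by omega),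
      if_neg (show ¬(e - 1 = kk - ii - jj ∧ c - 1 = kk - jj) by omega),
      if_neg (show ¬(e - 0 + 1 = kk - ii - jj ∧ c - 1 + 1 = kk - jj) by omega),
      if_pos (show (e - 0 = kk - ii - jj ∧ c - 1 + 1 = kk - jj) by omega),
      if_neg (show ¬(e - 0 = kk - ii - jj ∧ c - 1 = kk - jj) by omega),
      if_neg (show ¬(e - 0 + 1 = kk - ii - jj ∧ c - 0 + 1 = kk - jj) by omega),
      if_neg (show ¬(e - 0 = kk - ii - jj ∧ c - 0 + 1 = kk - jj) by omega),
      if_pos (show (e - 0 = kk - ii - jj ∧ c - 0 = kk - jj) by omega),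
      if_neg (show ¬(e = kk - (ii - 1) - jj ∧ c = kk - jj) by omega),
      if_neg (show ¬(e = kk - ii - (jj - 1) ∧ c = kk - (jj - 1)) by omega),
      if_neg (show ¬(e = kk - (ii + 1) - jj ∧ c = kk - jj) by omega),
      if_neg (show ¬(e = kk - ii - (jj + 1) ∧ c = kk - (jj + 1)) by omega),
      if_neg (show ¬(e = kk - (ii + 1) - (jj - 1) ∧ c = kk - (jj - 1)) by omega),
      if_neg (show ¬(e = kk - (ii - 1) - (jj + 1) ∧ c = kk - (jj + 1)) by omega),
      if_pos (show (e = kk - ii - jj ∧ c = kk - jj) by omega)]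
    have hre : (e:ℝ) = (kk:ℝ) - (ii:ℝ) - (jj:ℝ) := by exact_mod_cast he
    have hrc : (c:ℝ) = (kk:ℝ) - (jj:ℝ) := by exact_mod_cast hc
    rw [hrf, hrg, hrk1, hrk0, hre, hrc]; ring
  · rw [if_neg (show ¬(e - 1 + 1 = kk - ii - jj ∧ c - 1 + 1 = kk - jj) by omega),
      if_neg (show ¬(e - 1 = kk - ii - jj ∧ c - 1 + 1 = kk - jj) by omega),
      if_neg (show ¬(e - 1 = kk - ii - jj ∧ c - 1 = kk - jj) by omega),
      if_neg (show ¬(e - 0 + 1 = kk - ii - jj ∧ c - 1 + 1 = kk - jj) by omega),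
      if_neg (show ¬(e - 0 = kk - ii - jj ∧ c - 1 + 1 = kk - jj) by omega),
      if_neg (show ¬(e - 0 = kk - ii - jj ∧ c - 1 = kk - jj) by omega),
      if_neg (show ¬(e - 0 + 1 = kk - ii - jj ∧ c - 0 + 1 = kk - jj) by omega),
      if_neg (show ¬(e - 0 = kk - ii - jj ∧ c - 0 + 1 = kk - jj) by omega),
      if_neg (show ¬(e - 0 = kk - ii - jj ∧ c - 0 = kk - jj) by omega),
      if_neg (show ¬(e = kk - (ii - 1) - jj ∧ c = kk - jj) by omega),
      if_neg (show ¬(e = kk - ii - (jj - 1) ∧ c = kk - (jj - 1)) by omega),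
      if_neg (show ¬(e = kk - (ii + 1) - jj ∧ c = kk - jj) by omega),
      if_neg (show ¬(e = kk - ii - (jj + 1) ∧ c = kk - (jj + 1)) by omega),
      if_neg (show ¬(e = kk - (ii + 1) - (jj - 1) ∧ c = kk - (jj - 1)) by omega),
      if_neg (show ¬(e = kk - (ii - 1) - (jj + 1) ∧ c = kk - (jj + 1)) by omega),
      if_neg (show ¬(e = kk - ii - jj ∧ c = kk - jj) by omega)]
    ring


/-- the recurrence A₀₁A_{ij} for the non-binary Johnson scheme. -/
theorem nbj_recurrence_A01 (r n k : ℕ) (hr : 3 ≤ r) (hn : 1 ≤ n) (hk : k ≤ n) :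
    ∀ i j : ℕ,
      nbjA r n k 0 1 * nbjA r n k i j =
        (((k : ℝ) - i - j + 1) * ((r : ℝ) - 2) * j) • nbjA r n k ((i : ℤ) - 1) j +
        (((k : ℝ) - i - j + 1) * ((n : ℝ) - k - j + 1) * ((r : ℝ) - 1)) •
          nbjA r n k i ((j : ℤ) - 1) +
        (((i : ℝ) + 1) * j) • nbjA r n k ((i : ℤ) + 1) j +
        (((j : ℝ) + 1) ^ 2) • nbjA r n k i ((j : ℤ) + 1) +
        (((i : ℝ) + 1) * ((n : ℝ) - k - j + 1) * ((r : ℝ) - 1)) •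
          nbjA r n k ((i : ℤ) + 1) ((j : ℤ) - 1) +
        (((j : ℝ) + 1) ^ 2 * ((r : ℝ) - 2)) • nbjA r n k ((i : ℤ) - 1) ((j : ℤ) + 1) +
        ((j : ℝ) * (((k : ℝ) - i - j) + ((r : ℝ) - 2) * i +
          ((n : ℝ) - k - j) * ((r : ℝ) - 1))) • nbjA r n k i j := by
  intro i j
  ext x y
  rw [Matrix.mul_apply]
  have h1 : (nbjE x.1 y.1 : ℤ) + (cF x.1 y.1 : ℤ) = (nbjC x.1 y.1 : ℤ) := by
    exact_mod_cast c_split x.1 y.1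
  have h2 : (nbjC x.1 y.1 : ℤ) + (cG x.1 y.1 : ℤ) = (k : ℤ) := by
    have h := k_split x.1 y.1; rw [x.2] at h; exact_mod_cast h
  have h3 : (nbjC x.1 y.1 : ℤ) + (cK1 x.1 y.1 : ℤ) = (k : ℤ) := by
    have h := k_split' x.1 y.1; rw [y.2] at h; exact_mod_cast h
  have h4 : (k : ℤ) + ((cK1 x.1 y.1 : ℤ) + (cK0 x.1 y.1 : ℤ)) = (n : ℤ) := by
    have h := n_split x.1 y.1; rw [x.2] at h; exact_mod_cast h
  have hfa := final_arith r n k i j (nbjE x.1 y.1) (nbjC x.1 y.1) (cF x.1 y.1) (cG x.1 y.1)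
    (cK1 x.1 y.1) (cK0 x.1 y.1) h1 h2 h3 h4
  have hcm := count_main hr x y ((k:ℤ) - i - j) ((k:ℤ) - j)
  simp only [nbjA, Matrix.of_apply, Matrix.add_apply, Matrix.smul_apply, smul_eq_mul]
  rw [hcm]
  simp only [gfun]
  push_cast at hfa ⊢
  linarith [hfa]
end
end

section
/- Let 𝔅 be a nondegenerate reflexive bilinear form on a finite-dimensional vector space over a finite field 𝔽_q, and let V, V', U be isotropic subspaces of the same dimension d with dim(V ∩ V') = d−1 (which holds in particular when (V,V') ∈ R_{10} or (V,V') ∈ R_{01}). If (V,U) ∈ R_{ij} and (V',U) ∈ R_{kℓ}, then |i+j − k−ℓ| ≤ 1 and |i − k| ≤ 1. Consequently, in the association scheme of isotropic d-subspaces with relations R_{ij}, the intersection numbers satisfy: |i+j−k−ℓ| ≥ 2 or |i−k| ≥ 2 implies p_{10,kℓ}^{ij} = p_{01,kℓ}^{ij} = 0. -/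
open Matrix Finset
open scoped Classical

noncomputable section

/-- A subspace is isotropic for a bilinear form if the form vanishes identically on it. -/
def IsIsotropic {F W : Type*} [Field F] [AddCommGroup W] [Module F W]
    (B : LinearMap.BilinForm F W) (V : Submodule F W) : Prop :=
  ∀ v ∈ V, ∀ w ∈ V, B v w = 0

/-- The relation R_{ij} on d-dimensional isotropic subspaces:
(V,U) ∈ R_{ij} iff dim(V ∩ U) = d−i−j and dim(V^⊥ ∩ U) = d−i (indices in ℤ). -/
def IsoRel {F W : Type*} [Field F] [AddCommGroup W] [Module F W]
    (B : LinearMap.BilinForm F W) (d : ℕ) (V U : Submodule F W) (i j : ℤ) : Prop :=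
  (Module.finrank F ↥(V ⊓ U) : ℤ) = (d : ℤ) - i - j ∧
  (Module.finrank F ↥(LinearMap.BilinForm.orthogonal B V ⊓ U) : ℤ) = (d : ℤ) - i

/-- Key counting fact: if `A ≤ B` then the codimension of `A ⊓ U` in `B ⊓ U`
is at most the codimension of `A` in `B`. -/
lemma aux_inf_finrank {F W : Type*} [Field F] [AddCommGroup W] [Module F W]
    [FiniteDimensional F W] {A B : Submodule F W} (U : Submodule F W) (h : A ≤ B) :
    Module.finrank F ↥(B ⊓ U) + Module.finrank F A ≤
      Module.finrank F B + Module.finrank F ↥(A ⊓ U) := by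
  have h1 := Submodule.finrank_sup_add_finrank_inf_eq A (B ⊓ U)
  have h2 : A ⊓ (B ⊓ U) = A ⊓ U := by rw [← inf_assoc, inf_eq_left.mpr h]
  have h3 : A ⊔ B ⊓ U ≤ B := sup_le h inf_le_left
  have h4 := Submodule.finrank_mono h3
  rw [h2] at h1
  omega

/-- for isotropic d-subspaces V, V', U with dim(V ∩ V') = d−1,
if (V,U) ∈ R_{ij} and (V',U) ∈ R_{kℓ} then |i+j−k−ℓ| ≤ 1 and |i−k| ≤ 1;
consequently, in the association scheme of isotropic d-subspaces, if
|i+j−k−ℓ| ≥ 2 or |i−k| ≥ 2 then p_{10,kℓ}^{ij} = p_{01,kℓ}^{ij} = 0. -/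
theorem isotropic_scheme_vanishing_intersection_numbers
    {F W : Type*} [Field F] [Fintype F] [AddCommGroup W] [Module F W]
    [FiniteDimensional F W]
    (B : LinearMap.BilinForm F W) (hnd : B.Nondegenerate) (hrefl : B.IsRefl)
    (d : ℕ) (hd : 1 ≤ d) :
    (∀ V V' U : Submodule F W,
      IsIsotropic B V → IsIsotropic B V' → IsIsotropic B U →
      Module.finrank F V = d → Module.finrank F V' = d → Module.finrank F U = d →
      Module.finrank F ↥(V ⊓ V') = d - 1 →
      ∀ i j k l : ℤ, IsoRel B d V U i j → IsoRel B d V' U k l →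
        |i + j - k - l| ≤ 1 ∧ |i - k| ≤ 1) ∧
    (∀ i j k l : ℤ, (2 ≤ |i + j - k - l| ∨ 2 ≤ |i - k|) →
      ∀ V V' : Submodule F W, IsIsotropic B V → IsIsotropic B V' →
        Module.finrank F V = d → Module.finrank F V' = d →
        IsoRel B d V V' i j →
        {U : Submodule F W | IsIsotropic B U ∧ Module.finrank F U = d ∧
          IsoRel B d V U 1 0 ∧ IsoRel B d U V' k l} = ∅ ∧
        {U : Submodule F W | IsIsotropic B U ∧ Module.finrank F U = d ∧
          IsoRel B d V U 0 1 ∧ IsoRel B d U V' k l} = ∅) := by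
  have main : ∀ V V' U : Submodule F W,
      IsIsotropic B V → IsIsotropic B V' → IsIsotropic B U →
      Module.finrank F V = d → Module.finrank F V' = d → Module.finrank F U = d →
      Module.finrank F ↥(V ⊓ V') = d - 1 →
      ∀ i j k l : ℤ, IsoRel B d V U i j → IsoRel B d V' U k l →
        |i + j - k - l| ≤ 1 ∧ |i - k| ≤ 1 := by
    intro V V' U hV hV' hU hdV hdV' hdU hVV' i j k l hVU hV'U
    obtain ⟨h1, h2⟩ := hVU
    obtain ⟨h3, h4⟩ := hV'U
    -- first inequality: intersections
    have a1 := aux_inf_finrank U (inf_le_left : V ⊓ V' ≤ V)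
    have a2 := aux_inf_finrank U (inf_le_right : V ⊓ V' ≤ V')
    have a3 : Module.finrank F ↥(V ⊓ V' ⊓ U) ≤ Module.finrank F ↥(V' ⊓ U) :=
      Submodule.finrank_mono (inf_le_inf_right U inf_le_right)
    have a4 : Module.finrank F ↥(V ⊓ V' ⊓ U) ≤ Module.finrank F ↥(V ⊓ U) :=
      Submodule.finrank_mono (inf_le_inf_right U inf_le_left)
    -- second inequality: orthogonals
    have hle1 : B.orthogonal V ≤ B.orthogonal (V ⊓ V') :=
      LinearMap.BilinForm.orthogonal_le inf_le_left
    have hle2 : B.orthogonal V' ≤ B.orthogonal (V ⊓ V') :=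
      LinearMap.BilinForm.orthogonal_le inf_le_right
    have b1 := aux_inf_finrank U hle1
    have b2 := aux_inf_finrank U hle2
    have b3 : Module.finrank F ↥(B.orthogonal V ⊓ U) ≤
        Module.finrank F ↥(B.orthogonal (V ⊓ V') ⊓ U) :=
      Submodule.finrank_mono (inf_le_inf_right U hle1)
    have b4 : Module.finrank F ↥(B.orthogonal V' ⊓ U) ≤
        Module.finrank F ↥(B.orthogonal (V ⊓ V') ⊓ U) :=
      Submodule.finrank_mono (inf_le_inf_right U hle2)
    have f1 : Module.finrank F ↥(B.orthogonal V) = Module.finrank F W - d := by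
      rw [LinearMap.BilinForm.finrank_orthogonal hnd, hdV]
    have f2 : Module.finrank F ↥(B.orthogonal V') = Module.finrank F W - d := by
      rw [LinearMap.BilinForm.finrank_orthogonal hnd, hdV']
    have f3 : Module.finrank F ↥(B.orthogonal (V ⊓ V')) = Module.finrank F W - (d - 1) := by
      rw [LinearMap.BilinForm.finrank_orthogonal hnd, hVV']
    have hdW : d ≤ Module.finrank F W := hdV ▸ Submodule.finrank_le V
    refine ⟨abs_le.mpr ⟨?_, ?_⟩, abs_le.mpr ⟨?_, ?_⟩⟩ <;> omega
  refine ⟨main, ?_⟩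
  intro i j k l habs V V' hV hV' hdV hdV' hrel
  constructor <;>
  · rw [Set.eq_empty_iff_forall_notMem]
    rintro U ⟨hU, hdU, hr1, hr2⟩
    have hVU : Module.finrank F ↥(V ⊓ U) = d - 1 := by
      have := hr1.1
      omega
    obtain ⟨h5, h6⟩ := main V U V' hV hU hV' hdV hdU hdV' hVU i j k l hrel hr2
    rcases habs with h | h <;> linarith
end
end

section
/- Let 𝔅 be a nondegenerate reflexive bilinear form on a finite-dimensional vector space over a finite field 𝔽_q, and let V, V' be isotropic d-dimensional subspaces with (V,V') ∈ R_{10}, i.e. dim(V ∩ V') = d−1 and dim(V^⊥ ∩ V') = d−1. Let U be an isotropic d-dimensional subspace with (V,U) ∈ R_{ij} and (V',U) ∈ R_{kℓ}. If |i+j − k−ℓ| = 1, then ℓ = j. Consequently, in the association scheme of isotropic d-subspaces with relations R_{ij}, the intersection numbers satisfy: |i+j−k−ℓ| = 1 and ℓ ≠ j imply p_{10,ij}^{kℓ} = 0. -/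
open Matrix Finset
open scoped Classical

noncomputable section

/-- Key geometric lemma: if `V ⊓ V'` has codimension 1 in both `V` and `V'`,
`V ⊓ orth V' ≤ V ⊓ V'`, and `dim(V ⊓ U) = dim(V' ⊓ U) + 1`, then
`dim(V^⊥ ⊓ U) = dim(V'^⊥ ⊓ U) + 1`. -/
lemma key_lemma {F W : Type*} [Field F] [AddCommGroup W] [Module F W] [FiniteDimensional F W]
    (B : LinearMap.BilinForm F W)
    (V V' U : Submodule F W) (d : ℕ)
    (hVi : IsIsotropic B V) (hUi : IsIsotropic B U)
    (hdV : Module.finrank F V = d)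
    (hdV' : Module.finrank F V' = d)
    (hW : Module.finrank F ↥(V ⊓ V') + 1 = d)
    (hperp : V ⊓ B.orthogonal V' ≤ V ⊓ V')
    (hdim : Module.finrank F ↥(V ⊓ U) = Module.finrank F ↥(V' ⊓ U) + 1) :
    Module.finrank F ↥(B.orthogonal V ⊓ U)
      = Module.finrank F ↥(B.orthogonal V' ⊓ U) + 1 := by
  -- obtain u ∈ (V ⊓ U) \ (V' ⊓ U)
  have hnotle : ¬ (V ⊓ U ≤ V' ⊓ U) := by
    intro h
    have := Submodule.finrank_mono h
    omega
  obtain ⟨u, huVU, huV'U⟩ := SetLike.not_le_iff_exists.mp hnotle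
  have huV : u ∈ V := huVU.1
  have huU : u ∈ U := huVU.2
  have huW : u ∉ V ⊓ V' := fun h => huV'U ⟨h.2, huU⟩
  have huV'perp : u ∉ B.orthogonal V' := fun h => huW (hperp ⟨huV, h⟩)
  -- V = (V ⊓ V') ⊔ span {u}
  have hspan : (V ⊓ V') ⊔ Submodule.span F {u} = V := by
    have hle : (V ⊓ V') ⊔ Submodule.span F {u} ≤ V :=
      sup_le inf_le_left (Submodule.span_le.mpr (by simpa using huV))
    have hlt : (V ⊓ V' : Submodule F W) < (V ⊓ V') ⊔ Submodule.span F {u} :=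
      lt_of_le_of_ne le_sup_left (fun h => huW (h ▸
        (Submodule.mem_sup_right (Submodule.mem_span_singleton_self u))))
    have h1 := Submodule.finrank_lt_finrank_of_lt hlt
    have h2 := Submodule.finrank_mono hle
    exact Submodule.eq_of_le_of_finrank_le hle (by omega)
  -- obtain u' ∈ V' \ (V ⊓ V')
  have hnotle' : ¬ (V' ≤ V ⊓ V') := by
    intro h
    have := Submodule.finrank_mono h
    omega
  obtain ⟨u', hu'V', hu'W⟩ := SetLike.not_le_iff_exists.mp hnotle'
  have hspan' : (V ⊓ V') ⊔ Submodule.span F {u'} = V' := by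
    have hle : (V ⊓ V') ⊔ Submodule.span F {u'} ≤ V' :=
      sup_le inf_le_right (Submodule.span_le.mpr (by simpa using hu'V'))
    have hlt : (V ⊓ V' : Submodule F W) < (V ⊓ V') ⊔ Submodule.span F {u'} :=
      lt_of_le_of_ne le_sup_left (fun h => hu'W (h ▸
        (Submodule.mem_sup_right (Submodule.mem_span_singleton_self u'))))
    have h1 := Submodule.finrank_lt_finrank_of_lt hlt
    have h2 := Submodule.finrank_mono hle
    exact Submodule.eq_of_le_of_finrank_le hle (by omega)
  -- inclusion orth V' ⊓ U ≤ orth V ⊓ U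
  have hincl : B.orthogonal V' ⊓ U ≤ B.orthogonal V ⊓ U := by
    rintro x ⟨hx1, hx2⟩
    refine ⟨fun v hv => ?_, hx2⟩
    rw [← hspan] at hv
    obtain ⟨w, hw, z, hz, rfl⟩ := Submodule.mem_sup.mp hv
    obtain ⟨c, rfl⟩ := Submodule.mem_span_singleton.mp hz
    have h1 : B w x = 0 := hx1 w hw.2
    have h2 : B u x = 0 := hUi u huU x hx2
    simp [LinearMap.BilinForm.IsOrtho, h1, h2]
  -- u shows strictness
  have huorthV : u ∈ B.orthogonal V ⊓ U :=
    ⟨fun n hn => hVi n hn u huV, huU⟩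
  have hstrict : B.orthogonal V' ⊓ U < B.orthogonal V ⊓ U :=
    lt_of_le_of_ne hincl (fun h => huV'perp ((h ▸ huorthV).1))
  have hge := Submodule.finrank_lt_finrank_of_lt hstrict
  -- upper bound via the functional x ↦ B u' x
  set P := B.orthogonal V ⊓ U with hP
  have hker : Submodule.map P.subtype (LinearMap.ker ((B u').domRestrict P))
      ≤ B.orthogonal V' ⊓ U := by
    rintro x ⟨⟨x, hxP⟩, hxker, rfl⟩
    refine ⟨fun y hy => ?_, hxP.2⟩
    rw [← hspan'] at hy
    obtain ⟨w, hw, z, hz, rfl⟩ := Submodule.mem_sup.mp hy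
    obtain ⟨c, rfl⟩ := Submodule.mem_span_singleton.mp hz
    have h1 : B w x = 0 := hxP.1 w hw.1
    have h2 : B u' x = 0 := hxker
    simp [LinearMap.BilinForm.IsOrtho, h1, h2]
  have hrank := LinearMap.finrank_range_add_finrank_ker ((B u').domRestrict P)
  have hrle : Module.finrank F ↥(LinearMap.range ((B u').domRestrict P)) ≤ 1 := by
    simpa using (LinearMap.range ((B u').domRestrict P)).finrank_le
  have hkle : Module.finrank F ↥(LinearMap.ker ((B u').domRestrict P))
      ≤ Module.finrank F ↥(B.orthogonal V' ⊓ U) := by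
    rw [← Submodule.finrank_map_subtype_eq P]
    exact Submodule.finrank_mono hker
  omega

theorem isotropic_part1
    {F W : Type*} [Field F] [AddCommGroup W] [Module F W]
    [FiniteDimensional F W]
    (B : LinearMap.BilinForm F W) (hrefl : B.IsRefl)
    (d : ℕ) (hd : 1 ≤ d) :
    ∀ V V' U : Submodule F W,
      IsIsotropic B V → IsIsotropic B V' → IsIsotropic B U →
      Module.finrank F V = d → Module.finrank F V' = d → Module.finrank F U = d →
      IsoRel B d V V' 1 0 →
      ∀ i j k l : ℤ, IsoRel B d V U i j → IsoRel B d V' U k l →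
        |i + j - k - l| = 1 → l = j := by
  intro V V' U hVi hV'i hUi hdV hdV' hdU hVV' i j k l hVU hV'U habs
  obtain ⟨c1, c2⟩ := hVV'
  obtain ⟨a1, a2⟩ := hVU
  obtain ⟨b1, b2⟩ := hV'U
  have hW : Module.finrank F ↥(V ⊓ V') + 1 = d := by omega
  have hWorth : Module.finrank F ↥(B.orthogonal V ⊓ V') + 1 = d := by omega
  -- V ⊓ V' ≤ orth V ⊓ V' and both have finrank d - 1, so they're equal
  have hWle : V ⊓ V' ≤ B.orthogonal V ⊓ V' := by
    rintro x ⟨hx1, hx2⟩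
    exact ⟨fun n hn => hVi n hn x hx1, hx2⟩
  have hWeq : V ⊓ V' = B.orthogonal V ⊓ V' :=
    Submodule.eq_of_le_of_finrank_le hWle (by omega)
  rcases (abs_eq (by norm_num : (0:ℤ) ≤ 1)).mp habs with hcase | hcase
  · -- i + j - k - l = 1 : dim(V' ⊓ U) = dim(V ⊓ U) + 1, apply lemma with roles swapped
    have hdim : Module.finrank F ↥(V' ⊓ U) = Module.finrank F ↥(V ⊓ U) + 1 := by omega
    have hperp : V' ⊓ B.orthogonal V ≤ V' ⊓ V := by
      rw [inf_comm (a := V') (b := V), inf_comm (a := V') (b := B.orthogonal V), ← hWeq]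
    have hkey := key_lemma B V' V U d hV'i hUi hdV' hdV
      (by rw [inf_comm]; omega) hperp hdim
    omega
  · -- i + j - k - l = -1 : dim(V ⊓ U) = dim(V' ⊓ U) + 1
    have hdim : Module.finrank F ↥(V ⊓ U) = Module.finrank F ↥(V' ⊓ U) + 1 := by omega
    -- need V ⊓ orth V' ≤ V ⊓ V'
    have hperp : V ⊓ B.orthogonal V' ≤ V ⊓ V' := by
      by_contra hcon
      obtain ⟨v, hvmem, hvW⟩ := SetLike.not_le_iff_exists.mp hcon
      -- V ⊓ V' ≤ V ⊓ orth V'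
      have hle1 : V ⊓ V' ≤ V ⊓ B.orthogonal V' := by
        rintro x ⟨hx1, hx2⟩
        exact ⟨hx1, fun n hn => hV'i n hn x hx2⟩
      have hlt : V ⊓ V' < V ⊓ B.orthogonal V' := lt_of_le_of_ne hle1 (fun h => hvW (h ▸ hvmem))
      have h1 := Submodule.finrank_lt_finrank_of_lt hlt
      have h2 : Module.finrank F ↥(V ⊓ B.orthogonal V') ≤ d :=
        hdV ▸ Submodule.finrank_mono inf_le_left
      have heq : V ⊓ B.orthogonal V' = V :=
        Submodule.eq_of_le_of_finrank_le inf_le_left (by omega)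
      -- so V ≤ orth V', hence V' ≤ orth V, contradicting dim(orth V ⊓ V') = d - 1
      have hVle : V ≤ B.orthogonal V' := by rw [← heq]; exact inf_le_right
      have hV'le : V' ≤ B.orthogonal V := by
        intro y hy n hn
        exact hrefl _ _ (hVle hn y hy)
      have : B.orthogonal V ⊓ V' = V' := inf_eq_right.mpr hV'le
      rw [this] at hWorth
      omega
    have hkey := key_lemma B V V' U d hVi hUi hdV hdV' hW hperp hdim
    omega

/-- for isotropic d-subspaces with (V,V') ∈ R_{10}, if (V,U) ∈ R_{ij},
(V',U) ∈ R_{kℓ} and |i+j−k−ℓ| = 1 then ℓ = j; consequently, in the association scheme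
of isotropic d-subspaces, |i+j−k−ℓ| = 1 and ℓ ≠ j imply p_{10,ij}^{kℓ} = 0. -/
theorem isotropic_scheme_vanishing_p10
    {F W : Type*} [Field F] [Fintype F] [AddCommGroup W] [Module F W]
    [FiniteDimensional F W]
    (B : LinearMap.BilinForm F W) (hnd : B.Nondegenerate) (hrefl : B.IsRefl)
    (d : ℕ) (hd : 1 ≤ d) :
    (∀ V V' U : Submodule F W,
      IsIsotropic B V → IsIsotropic B V' → IsIsotropic B U →
      Module.finrank F V = d → Module.finrank F V' = d → Module.finrank F U = d →
      IsoRel B d V V' 1 0 →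
      ∀ i j k l : ℤ, IsoRel B d V U i j → IsoRel B d V' U k l →
        |i + j - k - l| = 1 → l = j) ∧
    (∀ i j k l : ℤ, |i + j - k - l| = 1 → l ≠ j →
      ∀ V V' : Submodule F W, IsIsotropic B V → IsIsotropic B V' →
        Module.finrank F V = d → Module.finrank F V' = d →
        IsoRel B d V V' k l →
        {U : Submodule F W | IsIsotropic B U ∧ Module.finrank F U = d ∧
          IsoRel B d V U 1 0 ∧ IsoRel B d U V' i j} = ∅) := by
  refine ⟨isotropic_part1 B hrefl d hd, ?_⟩
  intro i j k l habs hne V V' hVi hV'i hdV hdV' hVV'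
  rw [Set.eq_empty_iff_forall_notMem]
  rintro U ⟨hUi, hdU, hVU, hUV'⟩
  have habs' : |k + l - i - j| = 1 := by
    rw [abs_eq (by norm_num : (0:ℤ) ≤ 1)] at habs ⊢
    omega
  exact hne (isotropic_part1 B hrefl d hd V U V' hVi hUi hV'i hdV hdU hdV' hVU
    k l i j hVV' hUV' habs').symm
end
end
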